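/- arXiv:1401.7911 — 6 statements merged into one kernel-verified Lean document; each statement's English description precedes it below -/
import Mathlib

section
/- Let n ≥ 3, let u,v ∈ C^n([a,b]) be such that dim P^n_{u,v}([a,b]) = n and such that condition (C1) holds. Then there exist unique functions U_{0,1,n-1} and U_{1,1,n-1} in span⟨u^{(n-2)}, v^{(n-2)}⟩ satisfying U_{0,1,n-1}(a)=1, U_{0,1,n-1}(b)=0, U_{1,1,n-1}(a)=0, U_{1,1,n-1}(b)=1, and moreover U_{0,1,n-1}(s) > 0 and U_{1,1,n-1}(s) > 0 for all s ∈ (a,b). -/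
/-!
Write `Uu`, `Uv` for the `(n-2)`-th derivatives of `u`, `v` on `[a, b]`. If `c Uu + d Uv` has two
zeros in `[a, b]`, it vanishes there by (C1), so by Taylor's theorem `c u + d v` agrees on `[a, b]`
with a polynomial of degree `< n - 2`; since `dim P = n`, the `n` generators of `P` are linearly
independent on `[a, b]`, which forces `c = d = 0`. Hence the boundary matrix of `(Uu, Uv)` at
`a, b` is invertible, which gives `U₀`, `U₁` (Cramer's rule) and their uniqueness, and an element
of `span {Uu, Uv}` vanishing at one endpoint cannot change sign on the rest of `[a, b]` without
a second zero (intermediate value theorem).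
-/

open Set

noncomputable section

/-- Iterated derivative within the interval `[a, b]`. -/
def dW (a b : ℝ) (k : ℕ) (f : ℝ → ℝ) : ℝ → ℝ :=
  iteratedDerivWithin k f (Set.Icc a b)

/-- Generating set `{1, s, ..., s^(n-3), u, v}` of the space `P^n_{u,v}`. -/
def genSet (n : ℕ) (u v : ℝ → ℝ) : Set (ℝ → ℝ) :=
  insert u (insert v {f : ℝ → ℝ | ∃ i : ℕ, i + 3 ≤ n ∧ f = fun s : ℝ => s ^ i})

/-- The space `P^n_{u,v}` as a subspace of `ℝ → ℝ`. -/
def Pspace (n : ℕ) (u v : ℝ → ℝ) : Submodule ℝ (ℝ → ℝ) :=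
  Submodule.span ℝ (genSet n u v)

/-- Restriction of functions to `[a, b]`, as a linear map. -/
def restrictMap (a b : ℝ) : (ℝ → ℝ) →ₗ[ℝ] (Set.Icc a b → ℝ) :=
  LinearMap.funLeft ℝ ℝ Subtype.val

/-- The dimension of `P^n_{u,v}([a,b])`, i.e. of the space of restrictions to `[a,b]`. -/
def dimP (n : ℕ) (u v : ℝ → ℝ) (a b : ℝ) : ℕ :=
  Module.finrank ℝ ((Pspace n u v).map (restrictMap a b))

/-- Condition (C1): if the `(n-2)`-th derivative of an element of `P^n_{u,v}([a,b])`
vanishes at two distinct points of `[a,b]`, it vanishes identically on `[a,b]`. -/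
def CondC1 (n : ℕ) (u v : ℝ → ℝ) (a b : ℝ) : Prop :=
  ∀ ψ ∈ Pspace n u v, ∀ s₁ ∈ Set.Icc a b, ∀ s₂ ∈ Set.Icc a b, s₁ ≠ s₂ →
    dW a b (n - 2) ψ s₁ = 0 → dW a b (n - 2) ψ s₂ = 0 →
      ∀ s ∈ Set.Icc a b, dW a b (n - 2) ψ s = 0

/-- Condition (C2): if the `(n-2)`-th and `(n-1)`-th derivatives of an element of
`P^n_{u,v}([a,b])` vanish at a common interior point, the `(n-2)`-th derivative
vanishes identically on `[a,b]`. -/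
def CondC2 (n : ℕ) (u v : ℝ → ℝ) (a b : ℝ) : Prop :=
  ∀ ψ ∈ Pspace n u v, ∀ s₁ ∈ Set.Ioo a b,
    dW a b (n - 2) ψ s₁ = 0 → dW a b (n - 1) ψ s₁ = 0 →
      ∀ s ∈ Set.Icc a b, dW a b (n - 2) ψ s = 0

open Polynomial

/-- The Haar condition for the two-dimensional space `span {f, g}` on `s`. -/
def IsChebyshevPairOn (s : Set ℝ) (f g : ℝ → ℝ) : Prop :=
  ∀ c d : ℝ, ∀ x ∈ s, ∀ y ∈ s, x ≠ y →
    c * f x + d * g x = 0 → c * f y + d * g y = 0 → c = 0 ∧ d = 0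

namespace IsChebyshevPairOn

variable {s : Set ℝ} {f g : ℝ → ℝ}

theorem det_ne_zero (h : IsChebyshevPairOn s f g) {x y : ℝ} (hx : x ∈ s) (hy : y ∈ s)
    (hxy : x ≠ y) : f x * g y - f y * g x ≠ 0 := by
  intro hdet
  obtain ⟨w, hw, hker⟩ := Matrix.exists_mulVec_eq_zero_iff.2
    (show (!![f x, g x; f y, g y]).det = 0 by rw [Matrix.det_fin_two_of]; linear_combination hdet)
  have hx0 : w 0 * f x + w 1 * g x = 0 := by
    simpa [Matrix.mulVec, dotProduct, mul_comm] using congrFun hker 0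
  have hy0 : w 0 * f y + w 1 * g y = 0 := by
    simpa [Matrix.mulVec, dotProduct, mul_comm] using congrFun hker 1
  obtain ⟨h0, h1⟩ := h _ _ x hx y hy hxy hx0 hy0
  exact hw (by ext i; fin_cases i <;> assumption)

theorem eq_zero_of_eq_zero_of_eq_zero (h : IsChebyshevPairOn s f g) {W : ℝ → ℝ}
    (hW : W ∈ Submodule.span ℝ {f, g}) {x y : ℝ} (hx : x ∈ s) (hy : y ∈ s) (hxy : x ≠ y)
    (hWx : W x = 0) (hWy : W y = 0) : W = 0 := by
  obtain ⟨c, d, rfl⟩ := Submodule.mem_span_pair.1 hW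
  obtain ⟨rfl, rfl⟩ := h c d x hx y hy hxy (by simpa using hWx) (by simpa using hWy)
  simp

theorem eq_of_apply_eq_of_apply_eq (h : IsChebyshevPairOn s f g) {W W' : ℝ → ℝ}
    (hW : W ∈ Submodule.span ℝ {f, g}) (hW' : W' ∈ Submodule.span ℝ {f, g}) {x y : ℝ}
    (hx : x ∈ s) (hy : y ∈ s) (hxy : x ≠ y) (hWx : W x = W' x) (hWy : W y = W' y) :
    W = W' :=
  sub_eq_zero.1 <| h.eq_zero_of_eq_zero_of_eq_zero (sub_mem hW hW') hx hy hxy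
    (sub_eq_zero.2 hWx) (sub_eq_zero.2 hWy)

theorem exists_mem_span_apply_eq (h : IsChebyshevPairOn s f g) {x y : ℝ} (hx : x ∈ s)
    (hy : y ∈ s) (hxy : x ≠ y) (α β : ℝ) :
    ∃ W ∈ Submodule.span ℝ {f, g}, W x = α ∧ W y = β := by
  have hD := h.det_ne_zero hx hy hxy
  -- Cramer's rule
  refine ⟨((α * g y - β * g x) / (f x * g y - f y * g x)) • f +
    ((β * f x - α * f y) / (f x * g y - f y * g x)) • g,
    Submodule.mem_span_pair.2 ⟨_, _, rfl⟩, ?_, ?_⟩ <;>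
  · simp only [Pi.add_apply, Pi.smul_apply, smul_eq_mul]
    rw [div_mul_eq_mul_div, div_mul_eq_mul_div, ← add_div, div_eq_iff hD]
    ring

theorem pos_of_pos_of_eq_zero (h : IsChebyshevPairOn s f g) {W : ℝ → ℝ}
    (hW : W ∈ Submodule.span ℝ {f, g}) {t : Set ℝ} (ht : IsPreconnected t) (hts : t ⊆ s)
    (hWt : ContinuousOn W t) {z : ℝ} (hz : z ∈ s) (hzt : z ∉ t) (hWz : W z = 0)
    {x : ℝ} (hx : x ∈ t) (hWx : 0 < W x) {y : ℝ} (hy : y ∈ t) : 0 < W y := by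
  by_contra! hWy
  obtain ⟨w, hw, hWw⟩ := ht.intermediate_value hy hx hWt ⟨hWy, hWx.le⟩
  have hW0 := h.eq_zero_of_eq_zero_of_eq_zero hW (hts hw) hz (ne_of_mem_of_not_mem hw hzt)
    hWw hWz
  simp [hW0] at hWx

end IsChebyshevPairOn

theorem continuousOn_of_mem_span_pair {s : Set ℝ} {f g W : ℝ → ℝ} (hf : ContinuousOn f s)
    (hg : ContinuousOn g s) (hW : W ∈ Submodule.span ℝ {f, g}) : ContinuousOn W s := by
  obtain ⟨c, d, rfl⟩ := Submodule.mem_span_pair.1 hW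
  exact (hf.const_smul c).add (hg.const_smul d)

theorem eqOn_taylorWithinEval_of_iteratedDerivWithin_eq_zero {f : ℝ → ℝ} {a b : ℝ} {k : ℕ}
    (hab : a ≤ b) (hf : ContDiffOn ℝ (k + 1) f (Icc a b))
    (hzero : ∀ y ∈ Icc a b, iteratedDerivWithin (k + 1) f (Icc a b) y = 0) :
    EqOn f (taylorWithinEval f k (Icc a b) a) (Icc a b) := by
  intro x hx
  have h := taylor_mean_remainder_bound (C := 0) hab hf hx (fun y hy => by simp [hzero y hy])
  rw [zero_mul, zero_div, norm_le_zero_iff, sub_eq_zero] at h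
  exact h

def powFamily (m : ℕ) : Fin m → ℝ → ℝ := fun i x => x ^ (i : ℕ)

theorem polynomial_eval_mem_span_powFamily {p : ℝ[X]} {m : ℕ} (hp : p.natDegree < m) :
    (fun x => p.eval x) ∈ Submodule.span ℝ (range (powFamily m)) := by
  have hsum : (fun x => p.eval x) = ∑ i : Fin m, p.coeff i • powFamily m i := by
    funext x
    simp [eval_eq_sum_range' hp, Fin.sum_univ_eq_sum_range (fun i => p.coeff i * x ^ i),
      powFamily]
  rw [hsum]
  exact Submodule.sum_mem _ fun i _ => Submodule.smul_mem _ _ (Submodule.subset_span ⟨i, rfl⟩)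

theorem taylorWithinEval_mem_span_powFamily (f : ℝ → ℝ) {k m : ℕ} (hkm : k < m)
    (s : Set ℝ) (x₀ : ℝ) :
    taylorWithinEval f k s x₀ ∈ Submodule.span ℝ (range (powFamily m)) := by
  have hsum : taylorWithinEval f k s x₀ = ∑ j ∈ Finset.range (k + 1),
      ((j.factorial : ℝ)⁻¹ * iteratedDerivWithin j f s x₀) • fun x => ((X - C x₀) ^ j).eval x := by
    funext x
    simp only [taylor_within_apply, Finset.sum_apply, Pi.smul_apply, eval_pow, eval_sub, eval_X,
      eval_C, smul_eq_mul]
    exact Finset.sum_congr rfl fun j _ => by ring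
  rw [hsum]
  refine Submodule.sum_mem _ fun j hj => Submodule.smul_mem _ _ ?_
  refine polynomial_eval_mem_span_powFamily ?_
  have := natDegree_pow_le_of_le j (natDegree_X_sub_C_le x₀)
  grind

theorem genSet_eq_range (n : ℕ) (u v : ℝ → ℝ) :
    genSet n u v = range (Sum.elim ![u, v] (powFamily (n - 2))) := by
  ext f
  simp only [genSet, mem_insert_iff, mem_ofPred_eq, mem_range, Sum.exists, Sum.elim_inl,
    Sum.elim_inr, Fin.exists_fin_two, Matrix.cons_val_zero, Matrix.cons_val_one]
  constructor
  · rintro (rfl | rfl | ⟨i, hi, rfl⟩)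
    · exact Or.inl (Or.inl rfl)
    · exact Or.inl (Or.inr rfl)
    · exact Or.inr ⟨⟨i, by omega⟩, rfl⟩
  · rintro ((rfl | rfl) | ⟨i, rfl⟩)
    · exact Or.inl rfl
    · exact Or.inr (Or.inl rfl)
    · exact Or.inr (Or.inr ⟨i, by omega, rfl⟩)

theorem linearIndependent_restrictMap_of_dimP_eq {n : ℕ} (hn : 2 ≤ n) {u v : ℝ → ℝ} {a b : ℝ}
    (hdim : dimP n u v a b = n) :
    LinearIndependent ℝ (restrictMap a b ∘ Sum.elim ![u, v] (powFamily (n - 2))) := by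
  rw [linearIndependent_iff_card_eq_finrank_span, Set.finrank, range_comp, ← genSet_eq_range,
    ← Submodule.map_span]
  change _ = dimP n u v a b
  simp only [hdim, Fintype.card_sum, Fintype.card_fin]
  omega

theorem dW_smul_add_smul {a b : ℝ} (hab : a < b) {k : ℕ} {u v : ℝ → ℝ}
    (hu : ContDiffOn ℝ k u (Icc a b)) (hv : ContDiffOn ℝ k v (Icc a b)) (c d : ℝ) {s : ℝ}
    (hs : s ∈ Icc a b) : dW a b k (c • u + d • v) s = c * dW a b k u s + d * dW a b k v s := by
  have hud := uniqueDiffOn_Icc hab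
  have hcu : ContDiffOn ℝ k (c • u) (Icc a b) := hu.const_smul c
  have hdv : ContDiffOn ℝ k (d • v) (Icc a b) := hv.const_smul d
  rw [dW, iteratedDerivWithin_add hs hud (hcu s hs) (hdv s hs),
    iteratedDerivWithin_const_smul hs hud c (hu s hs),
    iteratedDerivWithin_const_smul hs hud d (hv s hs)]
  rfl

theorem eq_zero_of_dW_smul_add_smul_eq_zero {n : ℕ} (hn : 3 ≤ n) {a b : ℝ} (hab : a < b)
    {u v : ℝ → ℝ} (hu : ContDiffOn ℝ (n - 2 : ℕ) u (Icc a b))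
    (hv : ContDiffOn ℝ (n - 2 : ℕ) v (Icc a b)) (hdim : dimP n u v a b = n) {c d : ℝ}
    (hzero : ∀ s ∈ Icc a b, dW a b (n - 2) (c • u + d • v) s = 0) : c = 0 ∧ d = 0 := by
  -- on `[a, b]`, `c • u + d • v` is a polynomial of degree `< n - 2`, so it lies in the span of
  -- two disjoint blocks of an independent family
  obtain ⟨k, hk⟩ : ∃ k, n - 2 = k + 1 := ⟨n - 3, by omega⟩
  have hψ : ContDiffOn ℝ (k + 1) (c • u + d • v) (Icc a b) := by
    have := (hu.const_smul c).add (hv.const_smul d)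
    rwa [hk, Nat.cast_add, Nat.cast_one] at this
  have htaylor := eqOn_taylorWithinEval_of_iteratedDerivWithin_eq_zero hab.le hψ
    (by rw [← hk]; exact hzero)
  obtain ⟨huv, -, hdisj⟩ := linearIndependent_sum.1
    (linearIndependent_restrictMap_of_dimP_eq (by omega) hdim)
  simp only [Function.comp_assoc, Sum.elim_comp_inl, Sum.elim_comp_inr] at huv hdisj
  have hpoly : restrictMap a b (c • u + d • v) ∈
      Submodule.span ℝ (range (restrictMap a b ∘ powFamily (n - 2))) := by
    rw [show restrictMap a b (c • u + d • v) = restrictMap a b (taylorWithinEval _ k (Icc a b) a)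
      from funext fun x => htaylor x.2, range_comp, ← Submodule.map_span]
    exact Submodule.mem_map_of_mem (taylorWithinEval_mem_span_powFamily _ (by omega) _ _)
  have hcomb : restrictMap a b (c • u + d • v) ∈
      Submodule.span ℝ (range (restrictMap a b ∘ ![u, v])) := by
    rw [map_add, map_smul, map_smul]
    exact add_mem (Submodule.smul_mem _ _ (Submodule.subset_span ⟨0, rfl⟩))
      (Submodule.smul_mem _ _ (Submodule.subset_span ⟨1, rfl⟩))
  have hrestrict := Submodule.disjoint_def.1 hdisj _ hcomb hpoly
  rw [map_add, map_smul, map_smul] at hrestrict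
  exact LinearIndependent.pair_iff.1 (by convert huv using 1; ext i; fin_cases i <;> rfl) c d
    hrestrict

theorem isChebyshevPairOn_dW {n : ℕ} (hn : 3 ≤ n) {a b : ℝ} (hab : a < b) {u v : ℝ → ℝ}
    (hu : ContDiffOn ℝ (n - 2 : ℕ) u (Icc a b)) (hv : ContDiffOn ℝ (n - 2 : ℕ) v (Icc a b))
    (hdim : dimP n u v a b = n) (hC1 : CondC1 n u v a b) :
    IsChebyshevPairOn (Icc a b) (dW a b (n - 2) u) (dW a b (n - 2) v) := by
  intro c d x hx y hy hxy hzx hzy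
  have hψ : c • u + d • v ∈ Pspace n u v :=
    add_mem (Submodule.smul_mem _ _ (Submodule.subset_span (mem_insert _ _)))
      (Submodule.smul_mem _ _ (Submodule.subset_span (mem_insert_of_mem _ (mem_insert _ _))))
  refine eq_zero_of_dW_smul_add_smul_eq_zero hn hab hu hv hdim fun s hs => ?_
  refine hC1 _ hψ x hx y hy hxy ?_ ?_ s hs <;>
  rwa [dW_smul_add_smul hab hu hv c d (by assumption)]

/-- Existence, uniqueness (as functions on `[a,b]`) and positivity of the
first-level functions `U_{0,1,n-1}`, `U_{1,1,n-1}` in `span⟨u^(n-2), v^(n-2)⟩` with the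
prescribed boundary values. -/
theorem statement0 (n : ℕ) (hn : 3 ≤ n) (a b : ℝ) (hab : a < b) (u v : ℝ → ℝ)
    (hu : ContDiffOn ℝ n u (Set.Icc a b)) (hv : ContDiffOn ℝ n v (Set.Icc a b))
    (hdim : dimP n u v a b = n) (hC1 : CondC1 n u v a b) :
    ∃ U₀ U₁ : ℝ → ℝ,
      U₀ ∈ Submodule.span ℝ {dW a b (n - 2) u, dW a b (n - 2) v} ∧
      U₁ ∈ Submodule.span ℝ {dW a b (n - 2) u, dW a b (n - 2) v} ∧
      U₀ a = 1 ∧ U₀ b = 0 ∧ U₁ a = 0 ∧ U₁ b = 1 ∧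
      (∀ s ∈ Set.Ioo a b, 0 < U₀ s ∧ 0 < U₁ s) ∧
      (∀ W ∈ Submodule.span ℝ {dW a b (n - 2) u, dW a b (n - 2) v},
        (W a = 1 ∧ W b = 0 → Set.EqOn W U₀ (Set.Icc a b)) ∧
        (W a = 0 ∧ W b = 1 → Set.EqOn W U₁ (Set.Icc a b))) := by
  have hu' : ContDiffOn ℝ (n - 2 : ℕ) u (Icc a b) := hu.of_le (by exact_mod_cast n.sub_le 2)
  have hv' : ContDiffOn ℝ (n - 2 : ℕ) v (Icc a b) := hv.of_le (by exact_mod_cast n.sub_le 2)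
  have hcheb := isChebyshevPairOn_dW hn hab hu' hv' hdim hC1
  have ha : a ∈ Icc a b := left_mem_Icc.2 hab.le
  have hb : b ∈ Icc a b := right_mem_Icc.2 hab.le
  have hcont {W : ℝ → ℝ} (hW : W ∈ Submodule.span ℝ {dW a b (n - 2) u, dW a b (n - 2) v}) :
      ContinuousOn W (Icc a b) := continuousOn_of_mem_span_pair
    (hu'.continuousOn_iteratedDerivWithin le_rfl (uniqueDiffOn_Icc hab))
    (hv'.continuousOn_iteratedDerivWithin le_rfl (uniqueDiffOn_Icc hab)) hW
  obtain ⟨U₀, hU₀, hU₀a, hU₀b⟩ := hcheb.exists_mem_span_apply_eq ha hb hab.ne 1 0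
  obtain ⟨U₁, hU₁, hU₁a, hU₁b⟩ := hcheb.exists_mem_span_apply_eq ha hb hab.ne 0 1
  refine ⟨U₀, U₁, hU₀, hU₁, hU₀a, hU₀b, hU₁a, hU₁b, fun s hs => ⟨?_, ?_⟩, fun W hW => ⟨?_, ?_⟩⟩
  · exact hcheb.pos_of_pos_of_eq_zero hU₀ isPreconnected_Ico Ico_subset_Icc_self
      ((hcont hU₀).mono Ico_subset_Icc_self) hb (by simp) hU₀b (left_mem_Ico.2 hab)
      (by simp [hU₀a]) (Ioo_subset_Ico_self hs)
  · exact hcheb.pos_of_pos_of_eq_zero hU₁ isPreconnected_Ioc Ioc_subset_Icc_self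
      ((hcont hU₁).mono Ioc_subset_Icc_self) ha (by simp) hU₁a (right_mem_Ioc.2 hab)
      (by simp [hU₁b]) (Ioo_subset_Ioc_self hs)
  · exact fun ⟨hWa, hWb⟩ x _ => congrFun (hcheb.eq_of_apply_eq_of_apply_eq hW hU₀ ha hb hab.ne
      (hWa.trans hU₀a.symm) (hWb.trans hU₀b.symm)) x
  · exact fun ⟨hWa, hWb⟩ x _ => congrFun (hcheb.eq_of_apply_eq_of_apply_eq hW hU₁ ha hb hab.ne
      (hWa.trans hU₁a.symm) (hWb.trans hU₁b.symm)) x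
end
end

section
/- Let n ≥ 3, let u,v ∈ C^n([a,b]) with dim P^n_{u,v}([a,b]) = n and condition (C1) holding, and let the functions U_{i,k,n-1} be defined by the integral recurrence. Then for all i = 0, ..., k and k = 2, ..., n-1: the j-th derivative U_{i,k,n-1}^{(j)}(a) = 0 for j = 0, ..., i-1, and U_{i,k,n-1}^{(j)}(b) = 0 for j = 0, ..., k-i-1. In particular, for k = n-1 the Bernstein functions B_{i,n-1} := U_{i,n-1,n-1} satisfy B_{i,n-1}^{(j)}(a) = 0 for j = 0, ..., i-1 and B_{i,n-1}^{(j)}(b) = 0 for j = 0, ..., n-i-2. -/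
/-!
Every `U_{i,k}` agrees on `[a, b]` with the `(n-1-k)`-th derivative of an element of
`P^n_{u,v}`: integrating such a derivative stays in `P^n_{u,v}`, the constant of integration being
the `(n-2-k)`-th derivative of a multiple of `s^(n-2-k)`. Differentiating the recurrence,
`U_{i,k+1}'` is a combination of `U_{i-1,k}` and `U_{i,k}`, so the vanishing orders at `a` and `b`
pass from row `k` to row `k+1` as soon as every `d_{i,k}` is nonzero.

This is where (C1) enters. If `d_{i,k} = 0`, then `W(s) = ∫_a^s U_{i,k}` vanishes to order `i+1`
at `a` and to order `k-i+1` at `b`, `k+2` zeros in all. Repeated Rolle gives two distinct zeros of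
`W^(k)`, which is the `(n-2)`-th derivative of an element of `P^n_{u,v}`; by (C1) it vanishes
identically, and integrating back through the zeros forces `W ≡ 0`, hence `U_{i,k} ≡ 0`. This is
excluded because `U_{i,k}^(i)(a) ≠ 0` for `i < k` and `U_{k,k}(b) = 1`, facts that are carried
along the induction.
-/

open Set

noncomputable section

/-- The number `d_{i,k,n-1} = ∫_a^b U_{i,k,n-1}(t) dt`. -/
def dInt (a b : ℝ) (U : ℕ → ℕ → ℝ → ℝ) (i k : ℕ) : ℝ :=
  ∫ t in a..b, U i k t

/-- The function `V_{i,k,n-1}(s) = ∫_a^s U_{i,k,n-1}(t)/d_{i,k,n-1} dt`. -/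
def Vfun (a b : ℝ) (U : ℕ → ℕ → ℝ → ℝ) (i k : ℕ) (s : ℝ) : ℝ :=
  ∫ t in a..s, U i k t / dInt a b U i k

/-- The integral recurrence defining the functions `U_{i,k,n-1}` (the second index of
`U` is `k`, the third index `n-1` being fixed). -/
structure Recur (n : ℕ) (u v : ℝ → ℝ) (a b : ℝ) (U : ℕ → ℕ → ℝ → ℝ) : Prop where
  base₀_mem : U 0 1 ∈ Submodule.span ℝ {dW a b (n - 2) u, dW a b (n - 2) v}
  base₁_mem : U 1 1 ∈ Submodule.span ℝ {dW a b (n - 2) u, dW a b (n - 2) v}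
  base₀_a : U 0 1 a = 1
  base₀_b : U 0 1 b = 0
  base₁_a : U 1 1 a = 0
  base₁_b : U 1 1 b = 1
  base_pos : ∀ s ∈ Set.Ioo a b, 0 < U 0 1 s ∧ 0 < U 1 1 s
  rec_zero : ∀ k, 2 ≤ k → k ≤ n - 1 → ∀ s, U 0 k s = 1 - Vfun a b U 0 (k - 1) s
  rec_mid : ∀ k, 2 ≤ k → k ≤ n - 1 → ∀ i, 1 ≤ i → i ≤ k - 1 → ∀ s,
    U i k s = Vfun a b U (i - 1) (k - 1) s - Vfun a b U i (k - 1) s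
  rec_top : ∀ k, 2 ≤ k → k ≤ n - 1 → ∀ s, U k k s = Vfun a b U (k - 1) (k - 1) s

section VanishingOrder

variable {𝕜 F : Type*} [NontriviallyNormedField 𝕜] [NormedAddCommGroup F] [NormedSpace 𝕜 F]

def VanishesToOrder (s : Set 𝕜) (f : 𝕜 → F) (x₀ : 𝕜) (p : ℕ) : Prop :=
  ∀ j < p, iteratedDerivWithin j f s x₀ = 0

variable {s : Set 𝕜} {f g : 𝕜 → F} {x₀ : 𝕜} {p q : ℕ}

@[simp]
theorem vanishesToOrder_zero : VanishesToOrder s f x₀ 0 := fun _ hj => absurd hj (Nat.not_lt_zero _)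

@[simp]
theorem vanishesToOrder_one : VanishesToOrder s f x₀ 1 ↔ f x₀ = 0 :=
  ⟨fun h => by simpa using h 0 one_pos, fun h j hj => by simpa [Nat.lt_one_iff.1 hj] using h⟩

theorem VanishesToOrder.mono (hf : VanishesToOrder s f x₀ p) (hqp : q ≤ p) :
    VanishesToOrder s f x₀ q :=
  fun j hj => hf j (hj.trans_le hqp)

theorem VanishesToOrder.congr (hf : VanishesToOrder s f x₀ p) (hfg : EqOn f g s) (hx₀ : x₀ ∈ s) :
    VanishesToOrder s g x₀ p :=
  fun j hj => (iteratedDerivWithin_congr hfg hx₀).symm.trans (hf j hj)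

theorem VanishesToOrder.const_smul (hf : VanishesToOrder s f x₀ p) (c : 𝕜) :
    VanishesToOrder s (c • f) x₀ p :=
  fun j hj => by rw [iteratedDerivWithin_const_smul_field, hf j hj, smul_zero]

theorem VanishesToOrder.add (hs : UniqueDiffOn 𝕜 s) (hx₀ : x₀ ∈ s)
    (hf : VanishesToOrder s f x₀ p) (hg : VanishesToOrder s g x₀ p)
    (hf' : ContDiffWithinAt 𝕜 p f s x₀) (hg' : ContDiffWithinAt 𝕜 p g s x₀) :
    VanishesToOrder s (f + g) x₀ p := fun j hj => by
  rw [iteratedDerivWithin_add hx₀ hs (hf'.of_le (by exact_mod_cast hj.le))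
    (hg'.of_le (by exact_mod_cast hj.le)), hf j hj, hg j hj, add_zero]

theorem iteratedDerivWithin_succ_eqOn_of_hasDerivWithinAt (hs : UniqueDiffOn 𝕜 s)
    (hfg : ∀ x ∈ s, HasDerivWithinAt f (g x) s x) (j : ℕ) :
    EqOn (iteratedDerivWithin (j + 1) f s) (iteratedDerivWithin j g s) s := by
  rw [iteratedDerivWithin_succ']
  exact iteratedDerivWithin_congr fun x hx => (hfg x hx).derivWithin (hs x hx)

theorem VanishesToOrder.succ_of_hasDerivWithinAt (hs : UniqueDiffOn 𝕜 s) (hx₀ : x₀ ∈ s)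
    (hfg : ∀ x ∈ s, HasDerivWithinAt f (g x) s x) (hf : f x₀ = 0)
    (hg : VanishesToOrder s g x₀ p) : VanishesToOrder s f x₀ (p + 1)
  | 0, _ => hf
  | j + 1, hj => (iteratedDerivWithin_succ_eqOn_of_hasDerivWithinAt hs hfg j hx₀).trans
      (hg j (by omega))

theorem iteratedDerivWithin_iteratedDerivWithin (j m : ℕ) :
    iteratedDerivWithin j (iteratedDerivWithin m f s) s = iteratedDerivWithin (j + m) f s := by
  have h (k : ℕ) (g : 𝕜 → F) : iteratedDerivWithin k g s = (fun g => derivWithin g s)^[k] g :=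
    funext fun _ => iteratedDerivWithin_eq_iterate
  rw [h, h, h, Function.iterate_add_apply]

theorem ContDiffOn.iteratedDerivWithin {m r : ℕ} (hf : ContDiffOn 𝕜 (m + r : ℕ) f s)
    (hs : UniqueDiffOn 𝕜 s) : ContDiffOn 𝕜 r (iteratedDerivWithin m f s) s := by
  induction m generalizing f with
  | zero => simpa using hf
  | succ m ih =>
    rw [iteratedDerivWithin_succ']
    exact ih (hf.derivWithin hs (by push_cast; exact le_of_eq (by ring)))

end VanishingOrder

section RealInterval

variable {a b : ℝ}

theorem hasDerivWithinAt_integral_Icc (hab : a ≤ b) {w : ℝ → ℝ} (hw : ContinuousOn w (Icc a b))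
    {x : ℝ} (hx : x ∈ Icc a b) :
    HasDerivWithinAt (fun s => ∫ t in a..s, w t) (w x) (Icc a b) x := by
  set w' := IccExtend hab ((Icc a b).domRestrict w)
  have hw' : Continuous w' := continuous_IccExtend_iff.2 hw.domRestrict
  have heq : EqOn w' w (Icc a b) := fun y hy => IccExtend_of_mem hab _ hy
  have hint : EqOn (fun s => ∫ t in a..s, w t) (fun s => ∫ t in a..s, w' t) (Icc a b) :=
    fun y hy => intervalIntegral.integral_congr fun t ht =>
      (heq (Icc_subset_Icc_right hy.2 (uIcc_of_le hy.1 ▸ ht))).symm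
  exact ((hw'.integral_hasStrictDerivAt a x).hasDerivAt.hasDerivWithinAt.congr hint
    (hint hx)).congr_deriv (heq hx)

theorem exists_finset_deriv_eq_zero {f : ℝ → ℝ} (hf : ContinuousOn f (Icc a b)) {Z : Finset ℝ}
    (hZ : ↑Z ⊆ Icc a b) (hZ0 : ∀ x ∈ Z, f x = 0) :
    ∃ Z' : Finset ℝ, ↑Z' ⊆ Ioo a b ∧ (∀ x ∈ Z', deriv f x = 0) ∧ Z.card ≤ Z'.card + 1 := by
  classical
  have hrolle : ∀ x ∈ Z, ∀ y ∈ Z, x < y → ∃ c ∈ Ioo x y, deriv f c = 0 :=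
    fun x hx y hy hxy => exists_deriv_eq_zero hxy
      (hf.mono (Icc_subset_Icc (hZ hx).1 (hZ hy).2)) (by rw [hZ0 x hx, hZ0 y hy])
  choose! c hc using hrolle
  refine ⟨((Z ×ˢ Z).filter fun p => p.1 < p.2).image fun p => c p.1 p.2, ?_, ?_, ?_⟩
  · intro z hz
    simp only [Finset.coe_image, Finset.coe_filter, Finset.mem_product] at hz
    obtain ⟨⟨x, y⟩, ⟨⟨hx, hy⟩, hxy⟩, rfl⟩ := hz
    exact Ioo_subset_Ioo (hZ hx).1 (hZ hy).2 (hc x hx y hy hxy).1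
  · simp only [Finset.mem_image, Finset.mem_filter, Finset.mem_product]
    rintro _ ⟨⟨x, y⟩, ⟨⟨hx, hy⟩, hxy⟩, rfl⟩
    exact (hc x hx y hy hxy).2
  · refine Finset.card_le_of_interleaved fun x hx y hy hxy _ => ⟨c x y, ?_, (hc x hx y hy hxy).1⟩
    exact Finset.mem_image.2 ⟨(x, y), by simp [hx, hy, hxy], rfl⟩

theorem eq_add_sub_of_hasDerivWithinAt_Icc (hab : a < b) {F G g : ℝ → ℝ}
    (hF : ∀ x ∈ Icc a b, HasDerivWithinAt F (g x) (Icc a b) x)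
    (hG : ∀ x ∈ Icc a b, HasDerivWithinAt G (g x) (Icc a b) x) :
    ∀ x ∈ Icc a b, F x = G x + (F a - G a) := by
  have hH (x : ℝ) (hx : x ∈ Icc a b) : HasDerivWithinAt (F - G) 0 (Icc a b) x := by
    simpa using (hF x hx).sub (hG x hx)
  have hconst := constant_of_derivWithin_zero (fun x hx => (hH x hx).differentiableWithinAt)
    fun x hx => (hH x (Ico_subset_Icc_self hx)).derivWithin
      (uniqueDiffOn_Icc hab x (Ico_subset_Icc_self hx))
  intro x hx
  linarith [show F x - G x = F a - G a from hconst x hx]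

end RealInterval

section ZeroCounting

variable {a b : ℝ}

theorem exists_finset_zeros_of_vanishesToOrder (hab : a < b) {f : ℝ → ℝ} {p q : ℕ}
    (ha : VanishesToOrder (Icc a b) f a p) (hb : VanishesToOrder (Icc a b) f b q)
    {S : Finset ℝ} (hS : ↑S ⊆ Ioo a b) (hS0 : ∀ x ∈ S, f x = 0) :
    ∃ Z : Finset ℝ, ↑Z ⊆ Icc a b ∧ (∀ x ∈ Z, f x = 0) ∧ S.card + min p 1 + min q 1 ≤ Z.card := by
  classical
  have ha0 : 0 < p → f a = 0 := fun hp => by simpa using ha 0 hp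
  have hb0 : 0 < q → f b = 0 := fun hq => by simpa using hb 0 hq
  have hE : Disjoint S ({a, b} : Finset ℝ) := by
    simp only [Finset.disjoint_insert_right, Finset.disjoint_singleton_right]
    exact ⟨fun h => (hS h).1.false, fun h => (hS h).2.false⟩
  refine ⟨S ∪ ({a, b} : Finset ℝ).filter (f · = 0), ?_, ?_, ?_⟩
  · simp only [Finset.coe_union, Finset.coe_filter, union_subset_iff]
    refine ⟨hS.trans Ioo_subset_Icc_self, fun x ⟨hx, _⟩ => ?_⟩
    rcases Finset.mem_insert.1 hx with rfl | hx
    · exact left_mem_Icc.2 hab.le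
    · rw [Finset.mem_singleton.1 hx]; exact right_mem_Icc.2 hab.le
  · simp only [Finset.mem_union, Finset.mem_filter]
    rintro x (hx | ⟨_, hx⟩)
    exacts [hS0 x hx, hx]
  · rw [Finset.card_union_of_disjoint (hE.mono_right (Finset.filter_subset _ _)), add_assoc]
    gcongr
    rcases Nat.eq_zero_or_pos p with hp | hp <;> rcases Nat.eq_zero_or_pos q with hq | hq
    · simp [hp, hq]
    · have hbZ : b ∈ ({a, b} : Finset ℝ).filter (f · = 0) := by simp [hb0 hq]
      have := Finset.card_pos.2 ⟨b, hbZ⟩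
      omega
    · have haZ : a ∈ ({a, b} : Finset ℝ).filter (f · = 0) := by simp [ha0 hp]
      have := Finset.card_pos.2 ⟨a, haZ⟩
      omega
    · rw [Finset.filter_true_of_mem (by simp [ha0 hp, hb0 hq]), Finset.card_pair hab.ne]
      omega

theorem eqOn_zero_of_vanishesToOrder (hab : a < b) {t : ℕ} {f : ℝ → ℝ}
    (hf : ContDiffOn ℝ t f (Icc a b))
    (hC : ∀ s₁ ∈ Icc a b, ∀ s₂ ∈ Icc a b, s₁ ≠ s₂ → iteratedDerivWithin t f (Icc a b) s₁ = 0 →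
      iteratedDerivWithin t f (Icc a b) s₂ = 0 →
        EqOn (iteratedDerivWithin t f (Icc a b)) 0 (Icc a b))
    {p q : ℕ} (hp : p ≤ t + 1) (hq : q ≤ t + 1)
    (ha : VanishesToOrder (Icc a b) f a p) (hb : VanishesToOrder (Icc a b) f b q)
    {S : Finset ℝ} (hS : ↑S ⊆ Ioo a b) (hS0 : ∀ x ∈ S, f x = 0)
    (hcount : t + 2 ≤ p + q + S.card) :
    EqOn f 0 (Icc a b) := by
  induction t generalizing f p q S with
  | zero =>
    obtain ⟨Z, hZ, hZ0, hZcard⟩ := exists_finset_zeros_of_vanishesToOrder hab ha hb hS hS0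
    obtain ⟨z₁, hz₁, z₂, hz₂, hne⟩ := Finset.one_lt_card.1 (by omega : 1 < Z.card)
    simpa using hC z₁ (hZ hz₁) z₂ (hZ hz₂) hne (by simpa using hZ0 z₁ hz₁)
      (by simpa using hZ0 z₂ hz₂)
  | succ t ih =>
    obtain ⟨Z, hZ, hZ0, hZcard⟩ := exists_finset_zeros_of_vanishesToOrder hab ha hb hS hS0
    obtain ⟨Z', hZ', hZ'0, hZZ'⟩ := exists_finset_deriv_eq_zero hf.continuousOn hZ hZ0
    have hf' : EqOn (derivWithin f (Icc a b)) 0 (Icc a b) := by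
      refine ih (hf.derivWithin (uniqueDiffOn_Icc hab) (by push_cast; rfl)) ?_
        (p := p - 1) (q := q - 1) (by omega) (by omega)
        (fun j hj => by rw [← iteratedDerivWithin_succ']; exact ha (j + 1) (by omega))
        (fun j hj => by rw [← iteratedDerivWithin_succ']; exact hb (j + 1) (by omega))
        hZ' (fun x hx => ?_) (by omega)
      · simpa only [← iteratedDerivWithin_succ'] using hC
      · rw [derivWithin_of_mem_nhds (Icc_mem_nhds (hZ' hx).1 (hZ' hx).2)]
        exact hZ'0 x hx
    obtain ⟨z, hz⟩ : Z.Nonempty := Finset.card_pos.1 (by omega)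
    have hconst := constant_of_derivWithin_zero (hf.differentiableOn (by simp))
      fun x hx => hf' (Ico_subset_Icc_self hx)
    intro x hx
    rw [hconst x hx, ← hconst z (hZ hz)]
    exact hZ0 z hz

end ZeroCounting

section Pspace

variable {n : ℕ} {u v : ℝ → ℝ} {a b : ℝ}

theorem pow_mem_Pspace {m : ℕ} (hm : m + 3 ≤ n) : (fun s : ℝ => s ^ m) ∈ Pspace n u v :=
  Submodule.subset_span (mem_insert_of_mem _ (mem_insert_of_mem _ ⟨m, hm, rfl⟩))

theorem contDiffOn_of_mem_Pspace (hu : ContDiffOn ℝ n u (Icc a b))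
    (hv : ContDiffOn ℝ n v (Icc a b)) {ψ : ℝ → ℝ} (hψ : ψ ∈ Pspace n u v) :
    ContDiffOn ℝ n ψ (Icc a b) := by
  induction hψ using Submodule.span_induction with
  | mem x hx =>
    rcases hx with rfl | rfl | ⟨i, -, rfl⟩
    exacts [hu, hv, (contDiff_id.pow i).contDiffOn]
  | zero => exact contDiffOn_const
  | add x y _ _ hx hy => exact hx.add hy
  | smul c x _ hx => exact hx.const_smul c

def IsDerivOfPspace (n : ℕ) (u v : ℝ → ℝ) (a b : ℝ) (m : ℕ) (f : ℝ → ℝ) : Prop :=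
  ∃ ψ ∈ Pspace n u v, EqOn f (dW a b m ψ) (Icc a b)

namespace IsDerivOfPspace

variable {m : ℕ} {f g : ℝ → ℝ}

theorem contDiffOn (hab : a < b) (hu : ContDiffOn ℝ n u (Icc a b))
    (hv : ContDiffOn ℝ n v (Icc a b)) (hf : IsDerivOfPspace n u v a b m f) {r : ℕ}
    (hmr : m + r ≤ n) : ContDiffOn ℝ r f (Icc a b) := by
  obtain ⟨ψ, hψ, hfψ⟩ := hf
  exact (((contDiffOn_of_mem_Pspace hu hv hψ).of_le (by exact_mod_cast hmr)).iteratedDerivWithin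
    (uniqueDiffOn_Icc hab)).congr hfψ

theorem add (hab : a < b) (hu : ContDiffOn ℝ n u (Icc a b))
    (hv : ContDiffOn ℝ n v (Icc a b)) (hm : m ≤ n) (hf : IsDerivOfPspace n u v a b m f)
    (hg : IsDerivOfPspace n u v a b m g) : IsDerivOfPspace n u v a b m (f + g) := by
  obtain ⟨φ, hφ, hfφ⟩ := hf
  obtain ⟨ψ, hψ, hgψ⟩ := hg
  refine ⟨φ + ψ, add_mem hφ hψ, fun x hx => ?_⟩
  have hsmooth {χ : ℝ → ℝ} (hχ : χ ∈ Pspace n u v) : ContDiffWithinAt ℝ m χ (Icc a b) x :=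
    ((contDiffOn_of_mem_Pspace hu hv hχ).of_le (by exact_mod_cast hm)) x hx
  simp only [Pi.add_apply, dW, iteratedDerivWithin_add hx (uniqueDiffOn_Icc hab) (hsmooth hφ)
    (hsmooth hψ), hfφ hx, hgψ hx]

theorem const_smul (hf : IsDerivOfPspace n u v a b m f) (c : ℝ) :
    IsDerivOfPspace n u v a b m (c • f) := by
  obtain ⟨ψ, hψ, hfψ⟩ := hf
  exact ⟨c • ψ, Submodule.smul_mem _ c hψ, fun x hx => by
    simp [dW, iteratedDerivWithin_const_smul_field, hfψ hx]⟩

theorem of_hasDerivWithinAt (hab : a < b) (hu : ContDiffOn ℝ n u (Icc a b))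
    (hv : ContDiffOn ℝ n v (Icc a b)) (hm : m + 3 ≤ n) (hg : IsDerivOfPspace n u v a b (m + 1) g)
    {F : ℝ → ℝ} (hF : ∀ x ∈ Icc a b, HasDerivWithinAt F (g x) (Icc a b) x) :
    IsDerivOfPspace n u v a b m F := by
  obtain ⟨ψ, hψ, hgψ⟩ := hg
  have hD := uniqueDiffOn_Icc hab
  have hψC := contDiffOn_of_mem_Pspace hu hv hψ
  have hψm : ContDiffOn ℝ (m + 1 : ℕ) ψ (Icc a b) := hψC.of_le (by exact_mod_cast (by omega))
  have hderiv (x : ℝ) (hx : x ∈ Icc a b) : HasDerivWithinAt (dW a b m ψ) (g x) (Icc a b) x := by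
    rw [hgψ hx, dW, dW, iteratedDerivWithin_succ]
    exact ((hψm.iteratedDerivWithin hD).differentiableOn one_ne_zero x hx).hasDerivWithinAt
  have hF' := eq_add_sub_of_hasDerivWithinAt_Icc hab hF hderiv
  set c := F a - dW a b m ψ a
  refine ⟨ψ + (c / m.factorial) • fun s => s ^ m,
    add_mem hψ (Submodule.smul_mem _ _ (pow_mem_Pspace (by omega))), fun x hx => ?_⟩
  have hpow : ContDiffWithinAt ℝ m ((c / m.factorial) • fun s : ℝ => s ^ m) (Icc a b) x :=
    (contDiff_const.smul (contDiff_id.pow m)).contDiffWithinAt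
  rw [hF' x hx, dW, dW,
    iteratedDerivWithin_add hx hD ((hψC.of_le (by exact_mod_cast (by omega))) x hx) hpow,
    iteratedDerivWithin_const_smul_field, iteratedDerivWithin_pow hx hD,
    Nat.descFactorial_self, Nat.sub_self, pow_zero, mul_one, smul_eq_mul,
    div_mul_cancel₀ _ (by positivity)]

theorem eqOn_zero (hab : a < b) (hu : ContDiffOn ℝ n u (Icc a b))
    (hv : ContDiffOn ℝ n v (Icc a b)) (hC1 : CondC1 n u v a b) {t : ℕ} (ht : t + 2 ≤ n)
    (hf : IsDerivOfPspace n u v a b (n - 2 - t) f) {p q : ℕ} (hp : p ≤ t + 1) (hq : q ≤ t + 1)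
    (ha : VanishesToOrder (Icc a b) f a p) (hb : VanishesToOrder (Icc a b) f b q)
    (hcount : t + 2 ≤ p + q) : EqOn f 0 (Icc a b) := by
  obtain ⟨ψ, hψ, hfψ⟩ := hf
  have hD := uniqueDiffOn_Icc hab
  have hsmooth : ContDiffOn ℝ t (dW a b (n - 2 - t) ψ) (Icc a b) :=
    ((contDiffOn_of_mem_Pspace hu hv hψ).of_le
      (by exact_mod_cast (by omega))).iteratedDerivWithin hD
  have htop : iteratedDerivWithin t (dW a b (n - 2 - t) ψ) (Icc a b) = dW a b (n - 2) ψ := by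
    rw [dW, iteratedDerivWithin_iteratedDerivWithin, show t + (n - 2 - t) = n - 2 by omega, dW]
  have hzero := eqOn_zero_of_vanishesToOrder hab hsmooth (htop ▸ hC1 ψ hψ) hp hq
    (ha.congr hfψ (left_mem_Icc.2 hab.le)) (hb.congr hfψ (right_mem_Icc.2 hab.le))
    (S := ∅) (by simp) (by simp) (by simpa using hcount)
  exact fun x hx => (hfψ hx).trans (hzero hx)

end IsDerivOfPspace

end Pspace

section Recurrence

variable {n : ℕ} {u v : ℝ → ℝ} {a b : ℝ} {U : ℕ → ℕ → ℝ → ℝ}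

theorem Vfun_left_eq_zero (i k : ℕ) : Vfun a b U i k a = 0 := intervalIntegral.integral_same

theorem Vfun_right_eq_one {i k : ℕ} (hd : dInt a b U i k ≠ 0) : Vfun a b U i k b = 1 := by
  simp only [Vfun, intervalIntegral.integral_div]
  exact div_self hd

/-- The last two fields keep `U i k` from vanishing identically on `[a, b]`, which is what makes
`d_{i,k}` nonzero. -/
structure EntryInvariant (n : ℕ) (u v : ℝ → ℝ) (a b : ℝ) (U : ℕ → ℕ → ℝ → ℝ) (i k : ℕ) :
    Prop where
  isDerivOfPspace : IsDerivOfPspace n u v a b (n - 1 - k) (U i k)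
  vanishes_left : VanishesToOrder (Icc a b) (U i k) a i
  vanishes_right : VanishesToOrder (Icc a b) (U i k) b (k - i)
  iteratedDerivWithin_left_ne_zero : i < k → iteratedDerivWithin i (U i k) (Icc a b) a ≠ 0
  right_eq_one : i = k → U i k b = 1

def RowInvariant (n : ℕ) (u v : ℝ → ℝ) (a b : ℝ) (U : ℕ → ℕ → ℝ → ℝ) (k : ℕ) : Prop :=
  ∀ i ≤ k, EntryInvariant n u v a b U i k

theorem EntryInvariant.dInt_ne_zero (hab : a < b) (hu : ContDiffOn ℝ n u (Icc a b))
    (hv : ContDiffOn ℝ n v (Icc a b)) (hC1 : CondC1 n u v a b) {i k : ℕ}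
    (hE : EntryInvariant n u v a b U i k) (hk : 1 ≤ k) (hkn : k + 2 ≤ n) (hi : i ≤ k) :
    dInt a b U i k ≠ 0 := by
  intro hd
  have hD := uniqueDiffOn_Icc hab
  have hW (x : ℝ) (hx : x ∈ Icc a b) :
      HasDerivWithinAt (fun s => ∫ t in a..s, U i k t) (U i k x) (Icc a b) x :=
    hasDerivWithinAt_integral_Icc hab.le
      ((hE.isDerivOfPspace.contDiffOn hab hu hv (r := 0) (by omega)).continuousOn) hx
  have hWP : IsDerivOfPspace n u v a b (n - 2 - k) fun s => ∫ t in a..s, U i k t :=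
    .of_hasDerivWithinAt hab hu hv (by omega)
      (by rw [show n - 2 - k + 1 = n - 1 - k by omega]; exact hE.isDerivOfPspace) hW
  have hW0 := hWP.eqOn_zero hab hu hv hC1 hkn (p := i + 1) (q := k - i + 1) (by omega) (by omega)
    (.succ_of_hasDerivWithinAt hD (left_mem_Icc.2 hab.le) hW intervalIntegral.integral_same
      hE.vanishes_left)
    (.succ_of_hasDerivWithinAt hD (right_mem_Icc.2 hab.le) hW hd hE.vanishes_right) (by omega)
  have hU0 : EqOn (U i k) 0 (Icc a b) := fun x hx => by
    rw [← (hW x hx).derivWithin (hD x hx), derivWithin_congr hW0 (hW0 hx)]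
    simp
  rcases hi.lt_or_eq with hik | rfl
  · exact hE.iteratedDerivWithin_left_ne_zero hik
      (by simp [iteratedDerivWithin_congr hU0 (left_mem_Icc.2 hab.le)])
  · simpa [hE.right_eq_one rfl] using hU0 (right_mem_Icc.2 hab.le)

theorem EntryInvariant.hasDerivWithinAt_Vfun (hab : a < b) (hu : ContDiffOn ℝ n u (Icc a b))
    (hv : ContDiffOn ℝ n v (Icc a b)) {i k : ℕ} (hE : EntryInvariant n u v a b U i k) {x : ℝ}
    (hx : x ∈ Icc a b) :
    HasDerivWithinAt (Vfun a b U i k) (((dInt a b U i k)⁻¹ • U i k) x) (Icc a b) x := by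
  rw [Pi.smul_apply, smul_eq_mul, inv_mul_eq_div]
  exact hasDerivWithinAt_integral_Icc hab.le
    ((hE.isDerivOfPspace.contDiffOn hab hu hv (r := 0) (by omega)).continuousOn.div_const _) hx

theorem IsDerivOfPspace.of_hasDerivWithinAt_row (hab : a < b) (hu : ContDiffOn ℝ n u (Icc a b))
    (hv : ContDiffOn ℝ n v (Icc a b)) {k : ℕ} (hk : 1 ≤ k) (hkn : k + 2 ≤ n) {F g : ℝ → ℝ}
    (hg : IsDerivOfPspace n u v a b (n - 1 - k) g)
    (hF : ∀ x ∈ Icc a b, HasDerivWithinAt F (g x) (Icc a b) x) :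
    IsDerivOfPspace n u v a b (n - 1 - (k + 1)) F :=
  .of_hasDerivWithinAt hab hu hv (by omega)
    (by rwa [show n - 1 - (k + 1) + 1 = n - 1 - k by omega]) hF

theorem rowInvariant_one (hab : a < b) (hu : ContDiffOn ℝ n u (Icc a b))
    (hv : ContDiffOn ℝ n v (Icc a b)) (hU : Recur n u v a b U) : RowInvariant n u v a b U 1 := by
  intro i hi
  have hP : IsDerivOfPspace n u v a b (n - 1 - 1) (U i 1) := by
    have hmem : U i 1 ∈ Submodule.span ℝ {dW a b (n - 2) u, dW a b (n - 2) v} := by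
      interval_cases i
      exacts [hU.base₀_mem, hU.base₁_mem]
    obtain ⟨c₁, c₂, hc⟩ := Submodule.mem_span_pair.1 hmem
    rw [← hc, show n - 1 - 1 = n - 2 by omega]
    exact (IsDerivOfPspace.const_smul ⟨u, Submodule.subset_span (mem_insert _ _), fun _ _ => rfl⟩
      c₁).add hab hu hv (by omega) (.const_smul ⟨v, Submodule.subset_span
        (mem_insert_of_mem _ (mem_insert _ _)), fun _ _ => rfl⟩ c₂)
  interval_cases i
  · exact ⟨hP, by simp, by simpa using hU.base₀_b, fun _ => by simp [hU.base₀_a], by simp⟩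
  · exact ⟨hP, by simpa using hU.base₁_a, by simp, by simp, fun _ => hU.base₁_b⟩

section Step

variable {k : ℕ} (hab : a < b) (hu : ContDiffOn ℝ n u (Icc a b))
  (hv : ContDiffOn ℝ n v (Icc a b)) (hC1 : CondC1 n u v a b) (hU : Recur n u v a b U)
  (hL : RowInvariant n u v a b U k) (hk : 1 ≤ k) (hkn : k + 2 ≤ n)
include hab hu hv hC1 hU hL hk hkn

theorem RowInvariant.entryInvariant_zero_succ : EntryInvariant n u v a b U 0 (k + 1) := by
  have hE := hL 0 k.zero_le
  have hd := hE.dInt_ne_zero hab hu hv hC1 hk hkn k.zero_le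
  have hF : U 0 (k + 1) = fun s => 1 - Vfun a b U 0 k s :=
    funext fun s => by simpa using hU.rec_zero (k + 1) (by omega) (by omega) s
  have hderiv (x : ℝ) (hx : x ∈ Icc a b) :
      HasDerivWithinAt (U 0 (k + 1)) ((-(dInt a b U 0 k)⁻¹ • U 0 k) x) (Icc a b) x := by
    rw [hF, neg_smul, Pi.neg_apply]
    exact (hE.hasDerivWithinAt_Vfun hab hu hv hx).const_sub 1
  refine ⟨.of_hasDerivWithinAt_row hab hu hv hk hkn (hE.isDerivOfPspace.const_smul _) hderiv,
    by simp, ?_, fun _ => by simp [hF, Vfun_left_eq_zero], fun h => absurd h (by omega)⟩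
  simpa using VanishesToOrder.succ_of_hasDerivWithinAt (uniqueDiffOn_Icc hab)
    (right_mem_Icc.2 hab.le) hderiv (by simp [hF, Vfun_right_eq_one hd])
    (hE.vanishes_right.const_smul _)

theorem RowInvariant.entryInvariant_top_succ : EntryInvariant n u v a b U (k + 1) (k + 1) := by
  have hE := hL k le_rfl
  have hd := hE.dInt_ne_zero hab hu hv hC1 hk hkn le_rfl
  have hF : U (k + 1) (k + 1) = Vfun a b U k k :=
    funext fun s => by simpa using hU.rec_top (k + 1) (by omega) (by omega) s
  have hderiv (x : ℝ) (hx : x ∈ Icc a b) :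
      HasDerivWithinAt (U (k + 1) (k + 1)) (((dInt a b U k k)⁻¹ • U k k) x) (Icc a b) x :=
    hF ▸ hE.hasDerivWithinAt_Vfun hab hu hv hx
  refine ⟨.of_hasDerivWithinAt_row hab hu hv hk hkn (hE.isDerivOfPspace.const_smul _) hderiv,
    .succ_of_hasDerivWithinAt (uniqueDiffOn_Icc hab) (left_mem_Icc.2 hab.le) hderiv
      (by simp [hF, Vfun_left_eq_zero]) (hE.vanishes_left.const_smul _),
    by simp, fun h => absurd h (lt_irrefl _), fun _ => hF ▸ Vfun_right_eq_one hd⟩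

theorem RowInvariant.entryInvariant_succ_succ {i : ℕ} (hi : i + 1 ≤ k) :
    EntryInvariant n u v a b U (i + 1) (k + 1) := by
  have hD := uniqueDiffOn_Icc hab
  have haI := left_mem_Icc.2 hab.le
  have hbI := right_mem_Icc.2 hab.le
  have hE₁ := hL i (by omega)
  have hE₂ := hL (i + 1) hi
  have hd₁ := hE₁.dInt_ne_zero hab hu hv hC1 hk hkn (by omega)
  have hd₂ := hE₂.dInt_ne_zero hab hu hv hC1 hk hkn hi
  set g := (dInt a b U i k)⁻¹ • U i k + (-(dInt a b U (i + 1) k)⁻¹) • U (i + 1) k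
  have hF : U (i + 1) (k + 1) = Vfun a b U i k - Vfun a b U (i + 1) k :=
    funext fun s => by
      simpa using hU.rec_mid (k + 1) (by omega) (by omega) (i + 1) (by omega) (by omega) s
  have hderiv (x : ℝ) (hx : x ∈ Icc a b) :
      HasDerivWithinAt (U (i + 1) (k + 1)) (g x) (Icc a b) x := by
    rw [hF]
    refine ((hE₁.hasDerivWithinAt_Vfun hab hu hv hx).sub
      (hE₂.hasDerivWithinAt_Vfun hab hu hv hx)).congr_deriv ?_
    simp [g, sub_eq_add_neg]
  have hsmooth {j : ℕ} (hj : j ≤ k) (c : ℝ) {i' : ℕ} (hE : EntryInvariant n u v a b U i' k)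
      {x : ℝ} (hx : x ∈ Icc a b) : ContDiffWithinAt ℝ j (c • U i' k) (Icc a b) x :=
    ((hE.isDerivOfPspace.contDiffOn hab hu hv (r := j) (by omega)).const_smul c) x hx
  have hg_left : VanishesToOrder (Icc a b) g a i :=
    (hE₁.vanishes_left.const_smul _).add hD haI ((hE₂.vanishes_left.mono (by omega)).const_smul _)
      (hsmooth (by omega) _ hE₁ haI) (hsmooth (by omega) _ hE₂ haI)
  have hg_right : VanishesToOrder (Icc a b) g b (k - (i + 1)) :=
    ((hE₁.vanishes_right.mono (by omega)).const_smul _).add hD hbI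
      (hE₂.vanishes_right.const_smul _) (hsmooth (by omega) _ hE₁ hbI)
      (hsmooth (by omega) _ hE₂ hbI)
  refine ⟨.of_hasDerivWithinAt_row hab hu hv hk hkn ((hE₁.isDerivOfPspace.const_smul _).add
      hab hu hv (by omega) (hE₂.isDerivOfPspace.const_smul _)) hderiv,
    .succ_of_hasDerivWithinAt hD haI hderiv (by simp [hF, Vfun_left_eq_zero]) hg_left,
    ?_, fun _ => ?_, fun h => absurd h (by omega)⟩
  · rw [show k + 1 - (i + 1) = k - (i + 1) + 1 by omega]
    exact .succ_of_hasDerivWithinAt hD hbI hderiv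
      (by simp [hF, Vfun_right_eq_one hd₁, Vfun_right_eq_one hd₂]) hg_right
  · rw [iteratedDerivWithin_succ_eqOn_of_hasDerivWithinAt hD hderiv i haI,
      iteratedDerivWithin_add haI hD (hsmooth (by omega) _ hE₁ haI) (hsmooth (by omega) _ hE₂ haI),
      iteratedDerivWithin_const_smul_field, iteratedDerivWithin_const_smul_field,
      hE₂.vanishes_left i (lt_add_one i), smul_zero, add_zero, smul_eq_mul]
    exact mul_ne_zero (inv_ne_zero hd₁) (hE₁.iteratedDerivWithin_left_ne_zero (by omega))

theorem RowInvariant.succ : RowInvariant n u v a b U (k + 1) := by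
  rintro (_ | i) hi
  · exact hL.entryInvariant_zero_succ hab hu hv hC1 hU hk hkn
  · rcases Nat.lt_or_ge i k with hik | hik
    · exact hL.entryInvariant_succ_succ hab hu hv hC1 hU hk hkn hik
    · obtain rfl : i = k := by omega
      exact hL.entryInvariant_top_succ hab hu hv hC1 hU hk hkn

end Step

theorem rowInvariant (hab : a < b) (hu : ContDiffOn ℝ n u (Icc a b))
    (hv : ContDiffOn ℝ n v (Icc a b)) (hC1 : CondC1 n u v a b) (hU : Recur n u v a b U) :
    ∀ k, 1 ≤ k → k + 1 ≤ n → RowInvariant n u v a b U k := by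
  intro k hk
  induction k, hk using Nat.le_induction with
  | base => exact fun _ => rowInvariant_one hab hu hv hU
  | succ k hk ih => exact fun hkn => (ih (by omega)).succ hab hu hv hC1 hU hk hkn

end Recurrence

theorem statement3_general (n : ℕ) (a b : ℝ) (hab : a < b) (u v : ℝ → ℝ)
    (hu : ContDiffOn ℝ n u (Set.Icc a b)) (hv : ContDiffOn ℝ n v (Set.Icc a b))
    (hC1 : CondC1 n u v a b)
    (U : ℕ → ℕ → ℝ → ℝ) (hU : Recur n u v a b U) :
    (∀ k, 2 ≤ k → k ≤ n - 1 → ∀ i ≤ k,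
      (∀ j < i, dW a b j (U i k) a = 0) ∧
      (∀ j, j + i + 1 ≤ k → dW a b j (U i k) b = 0)) ∧
    (∀ i ≤ n - 1,
      (∀ j < i, dW a b j (U i (n - 1)) a = 0) ∧
      (∀ j, j + i + 2 ≤ n → dW a b j (U i (n - 1)) b = 0)) := by
  have hrow := rowInvariant hab hu hv hC1 hU
  refine ⟨fun k hk hkn i hi => ?_, fun i hi => ?_⟩
  · have hE := hrow k (by omega) (by omega) i hi
    exact ⟨hE.vanishes_left, fun j hj => hE.vanishes_right j (by omega)⟩
  · rcases Nat.lt_or_ge n 2 with hn | hn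
    · exact ⟨fun j hj => by omega, fun j hj => by omega⟩
    · have hE := hrow (n - 1) (by omega) (by omega) i hi
      exact ⟨hE.vanishes_left, fun j hj => hE.vanishes_right j (by omega)⟩

/-- Vanishing of derivatives of `U_{i,k,n-1}` at the endpoints:
`U_{i,k,n-1}^(j)(a) = 0` for `j = 0, ..., i-1` and `U_{i,k,n-1}^(j)(b) = 0` for
`j = 0, ..., k-i-1`; in particular for `B_{i,n-1} := U_{i,n-1,n-1}`:
`B_{i,n-1}^(j)(a) = 0` for `j = 0, ..., i-1` and `B_{i,n-1}^(j)(b) = 0` for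
`j = 0, ..., n-i-2`. -/
theorem statement3 (n : ℕ) (hn : 3 ≤ n) (a b : ℝ) (hab : a < b) (u v : ℝ → ℝ)
    (hu : ContDiffOn ℝ n u (Set.Icc a b)) (hv : ContDiffOn ℝ n v (Set.Icc a b))
    (hdim : dimP n u v a b = n) (hC1 : CondC1 n u v a b)
    (U : ℕ → ℕ → ℝ → ℝ) (hU : Recur n u v a b U) :
    (∀ k, 2 ≤ k → k ≤ n - 1 → ∀ i ≤ k,
      (∀ j < i, dW a b j (U i k) a = 0) ∧
      (∀ j, j + i + 1 ≤ k → dW a b j (U i k) b = 0)) ∧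
    (∀ i ≤ n - 1,
      (∀ j < i, dW a b j (U i (n - 1)) a = 0) ∧
      (∀ j, j + i + 2 ≤ n → dW a b j (U i (n - 1)) b = 0)) :=
  statement3_general n a b hab u v hu hv hC1 U hU
end
end

section
/- Let n ≥ 3, let u,v ∈ C^n([a,b]) with dim P^n_{u,v}([a,b]) = n and condition (C1) holding, and let the functions U_{i,k,n-1} be defined by the integral recurrence. Then for all k = 2, ..., n-1: the i-th derivative U_{i,k,n-1}^{(i)}(a) ≠ 0 for i = 0, ..., k-1, and the (k-i)-th derivative U_{i,k,n-1}^{(k-i)}(b) ≠ 0 for i = 1, ..., k. In particular, for k = n-1 the Bernstein functions B_{i,n-1} := U_{i,n-1,n-1} satisfy B_{i,n-1}^{(i)}(a) ≠ 0 for i = 0, ..., n-2 and B_{i,n-1}^{(n-i-1)}(b) ≠ 0 for i = 1, ..., n-1. -/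
open Set

noncomputable section

/-!
Induction on `k`. Besides the two non-vanishing statements, the level-`k` functions `U_{i,k}`
are positive on `(a, b)`, vanish to order `i` at `a` and `k - i` at `b`, and their `(k-1)`-st
derivatives lie in `span ⟨u^(n-2), v^(n-2)⟩`. Differentiating the recurrence gives
`U_{i,k+1}' = U_{i-1,k} / d_{i-1,k} - U_{i,k} / d_{i,k}`, which carries the endpoint orders and
signs from level `k` to level `k + 1` (positivity makes every `d_{i,k}` positive). Positivity at
level `k + 1` is the heart of the matter: an interior zero of `U_{i,k+1}`, together with the
zeros of order `i` at `a` and `k + 1 - i` at `b`, yields by repeated Rolle two distinct zeros of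
its `k`-th derivative, an element of the span; by (C1) that derivative vanishes identically, and
integrating back down forces `U_{i,k+1}^(i)(a) = 0`, contradicting the order of the zero at `a`.
-/

open Filter Topology

def VanishesOfTwoZerosOn (g : ℝ → ℝ) (s : Set ℝ) : Prop :=
  ∀ x₁ ∈ s, ∀ x₂ ∈ s, x₁ ≠ x₂ → g x₁ = 0 → g x₂ = 0 → EqOn g 0 s

lemma VanishesOfTwoZerosOn.congr {f g : ℝ → ℝ} {s : Set ℝ} (hg : VanishesOfTwoZerosOn g s)
    (hfg : EqOn f g s) : VanishesOfTwoZerosOn f s := by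
  intro x₁ hx₁ x₂ hx₂ hne h₁ h₂ x hx
  rw [hfg hx]
  exact hg x₁ hx₁ x₂ hx₂ hne (hfg hx₁ ▸ h₁) (hfg hx₂ ▸ h₂) hx

section Calculus

variable {a b : ℝ}

lemma dW_zero (f : ℝ → ℝ) : dW a b 0 f = f := iteratedDerivWithin_zero

lemma dW_succ_eq_of_hasDerivWithinAt (hab : a < b) {f f' : ℝ → ℝ}
    (hf : ∀ x ∈ Icc a b, HasDerivWithinAt f (f' x) (Icc a b) x) (j : ℕ) :
    EqOn (dW a b (j + 1) f) (dW a b j f') (Icc a b) := by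
  rw [dW, iteratedDerivWithin_succ']
  exact iteratedDerivWithin_congr fun x hx => (hf x hx).derivWithin (uniqueDiffOn_Icc hab x hx)

lemma hasDerivWithinAt_dW (hab : a < b) {f : ℝ → ℝ} {N m : ℕ}
    (hf : ContDiffOn ℝ N f (Icc a b)) (hm : m < N) {x : ℝ} (hx : x ∈ Icc a b) :
    HasDerivWithinAt (dW a b m f) (dW a b (m + 1) f x) (Icc a b) x := by
  unfold dW
  rw [iteratedDerivWithin_succ]
  exact (hf.differentiableOn_iteratedDerivWithin (by exact_mod_cast hm) (uniqueDiffOn_Icc hab)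
    x hx).hasDerivWithinAt

lemma continuousOn_dW (hab : a < b) {f : ℝ → ℝ} {N m : ℕ}
    (hf : ContDiffOn ℝ N f (Icc a b)) (hm : m ≤ N) : ContinuousOn (dW a b m f) (Icc a b) :=
  hf.continuousOn_iteratedDerivWithin (by exact_mod_cast hm) (uniqueDiffOn_Icc hab)

lemma dW_sub (hab : a < b) {f g : ℝ → ℝ} {j : ℕ} (hf : ContDiffOn ℝ j f (Icc a b))
    (hg : ContDiffOn ℝ j g (Icc a b)) {x : ℝ} (hx : x ∈ Icc a b) :
    dW a b j (f - g) x = dW a b j f x - dW a b j g x :=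
  iteratedDerivWithin_sub hx (uniqueDiffOn_Icc hab) (hf x hx) (hg x hx)

lemma contDiffOn_succ_of_hasDerivWithinAt (hab : a < b) {f f' : ℝ → ℝ} {N : ℕ}
    (hf : ∀ x ∈ Icc a b, HasDerivWithinAt f (f' x) (Icc a b) x)
    (hf' : ContDiffOn ℝ N f' (Icc a b)) : ContDiffOn ℝ (N + 1 : ℕ) f (Icc a b) := by
  rw [Nat.cast_add, Nat.cast_one, contDiffOn_succ_iff_derivWithin (uniqueDiffOn_Icc hab)]
  refine ⟨fun x hx => (hf x hx).differentiableWithinAt, by simp, hf'.congr fun x hx => ?_⟩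
  exact (hf x hx).derivWithin (uniqueDiffOn_Icc hab x hx)

lemma hasDerivWithinAt_integral {g : ℝ → ℝ} (hg : ContinuousOn g (Icc a b))
    {x : ℝ} (hx : x ∈ Icc a b) :
    HasDerivWithinAt (fun s => ∫ t in a..s, g t) (g x) (Icc a b) x := by
  have : Fact (x ∈ Icc a b) := ⟨hx⟩
  exact intervalIntegral.integral_hasDerivWithinAt_right
    ((hg.mono (Icc_subset_Icc_right hx.2)).intervalIntegrable_of_Icc hx.1)
    (hg.stronglyMeasurableAtFilter_nhdsWithin measurableSet_Icc x) (hg x hx)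

lemma pos_of_hasDerivWithinAt_pos {f f' : ℝ → ℝ}
    (hf : ∀ x ∈ Icc a b, HasDerivWithinAt f (f' x) (Icc a b) x)
    (hf' : ∀ x ∈ Ioo a b, 0 < f' x) (ha : f a = 0) : ∀ x ∈ Ioc a b, 0 < f x := by
  have hmono : StrictMonoOn f (Icc a b) := by
    refine strictMonoOn_of_hasDerivWithinAt_pos (convex_Icc a b)
      (fun x hx => (hf x hx).continuousWithinAt) (fun x hx => ?_) (by simpa using hf')
    rw [interior_Icc] at hx ⊢
    exact ((hf x (Ioo_subset_Icc_self hx)).hasDerivAt (Icc_mem_nhds hx.1 hx.2)).hasDerivWithinAt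
  intro x hx
  simpa [ha] using hmono ⟨le_rfl, hx.1.le.trans hx.2⟩ (Ioc_subset_Icc_self hx) hx.1

lemma eventually_pos_of_dW (hab : a < b) {f : ℝ → ℝ} {p : ℕ} (hf : ContDiffOn ℝ p f (Icc a b))
    (hzero : ∀ j < p, dW a b j f a = 0) (hpos : 0 < dW a b p f a) :
    ∀ᶠ x in 𝓝[>] a, 0 < f x := by
  induction p generalizing f with
  | zero =>
    rw [← nhdsWithin_Ioo_eq_nhdsGT hab]
    rw [dW_zero] at hpos
    exact ((hf.continuousOn a (left_mem_Icc.2 hab.le)).mono Ioo_subset_Icc_self).eventually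
      (eventually_gt_nhds hpos)
  | succ p ih =>
    have hf' : ∀ x ∈ Icc a b, HasDerivWithinAt f (derivWithin f (Icc a b) x) (Icc a b) x :=
      fun x hx => ((hf.differentiableOn (by simp)) x hx).hasDerivWithinAt
    have hshift : ∀ j, dW a b (j + 1) f a = dW a b j (derivWithin f (Icc a b)) a := fun j =>
      dW_succ_eq_of_hasDerivWithinAt hab hf' j (left_mem_Icc.2 hab.le)
    have hderiv := ih (hf.derivWithin (uniqueDiffOn_Icc hab) le_rfl)
      (fun j hj => hshift j ▸ hzero (j + 1) (by omega)) (hshift p ▸ hpos)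
    obtain ⟨c, hac, hc⟩ := mem_nhdsGT_iff_exists_Ioo_subset.1 (hderiv.and (Ioo_mem_nhdsGT hab))
    have hfc := pos_of_hasDerivWithinAt_pos (a := a) (b := min c b)
      (fun x hx => (hf' x ⟨hx.1, hx.2.trans (min_le_right _ _)⟩).mono
        (Icc_subset_Icc_right (min_le_right _ _)))
      (fun x hx => (hc ⟨hx.1, hx.2.trans_le (min_le_left _ _)⟩).1)
      (by simpa [dW_zero] using hzero 0 (by omega))
    exact mem_nhdsGT_iff_exists_Ioo_subset.2
      ⟨min c b, lt_min hac hab, fun x hx => hfc x (Ioo_subset_Ioc_self hx)⟩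

end Calculus

section ZeroCounting

variable {a b : ℝ}

lemma exists_finset_deriv_zeros {f f' : ℝ → ℝ} (hf : ContinuousOn f (Icc a b))
    (hf' : ∀ x ∈ Ioo a b, HasDerivAt f (f' x) x) {T : Finset ℝ} (hT : ↑T ⊆ Icc a b)
    (hfT : ∀ x ∈ T, f x = 0) :
    ∃ S : Finset ℝ, ↑S ⊆ Ioo a b ∧ (∀ x ∈ S, f' x = 0) ∧ T.card ≤ S.card + 1 := by
  have hrolle : ∀ x ∈ T, ∀ y ∈ T, x < y → ∃ z ∈ Ioo x y, f' z = 0 := fun x hx y hy hxy =>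
    exists_hasDerivAt_eq_zero hxy (hf.mono (Icc_subset_Icc (hT hx).1 (hT hy).2))
      ((hfT x hx).trans (hfT y hy).symm)
      fun z hz => hf' z ⟨(hT hx).1.trans_lt hz.1, hz.2.trans_le (hT hy).2⟩
  choose! z hz using hrolle
  classical
  refine ⟨((T ×ˢ T).filter fun p => p.1 < p.2).image fun p => z p.1 p.2, ?_, ?_, ?_⟩
  · intro w hw
    simp only [Finset.coe_image, Finset.coe_filter, Finset.mem_product] at hw
    obtain ⟨⟨x, y⟩, ⟨⟨hx, hy⟩, hxy⟩, rfl⟩ := hw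
    exact ⟨(hT hx).1.trans_lt (hz x hx y hy hxy).1.1, (hz x hx y hy hxy).1.2.trans_le (hT hy).2⟩
  · simp only [Finset.mem_image, Finset.mem_filter, Finset.mem_product]
    rintro _ ⟨⟨x, y⟩, ⟨⟨hx, hy⟩, hxy⟩, rfl⟩
    exact (hz x hx y hy hxy).2
  · refine Finset.card_le_of_interleaved fun x hx y hy hxy _ => ⟨z x y, ?_, (hz x hx y hy hxy).1⟩
    exact Finset.mem_image.2 ⟨(x, y), Finset.mem_filter.2 ⟨Finset.mem_product.2 ⟨hx, hy⟩, hxy⟩, rfl⟩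

lemma exists_finset_Icc_zeros (hab : a < b) {g : ℝ → ℝ} {S : Finset ℝ} (hS : ↑S ⊆ Ioo a b)
    (hgS : ∀ x ∈ S, g x = 0) (P Q : Prop) [Decidable P] [Decidable Q] (ha : P → g a = 0)
    (hb : Q → g b = 0) :
    ∃ T : Finset ℝ, ↑T ⊆ Icc a b ∧ (∀ x ∈ T, g x = 0) ∧
      S.card + (if P then 1 else 0) + (if Q then 1 else 0) ≤ T.card := by
  have haS : a ∉ S := fun h => lt_irrefl a (hS h).1
  have hbS : b ∉ S := fun h => lt_irrefl b (hS h).2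
  have hSIcc : ↑S ⊆ Icc a b := hS.trans Ioo_subset_Icc_self
  have haI : a ∈ Icc a b := left_mem_Icc.2 hab.le
  have hbI : b ∈ Icc a b := right_mem_Icc.2 hab.le
  by_cases hP : P <;> by_cases hQ : Q <;> simp only [hP, hQ, if_true, if_false]
  · refine ⟨insert a (insert b S), by simp [Set.insert_subset_iff, haI, hbI, hSIcc],
      by simpa [ha hP, hb hQ] using hgS, ?_⟩
    rw [Finset.card_insert_of_notMem (by simp [hab.ne, haS]), Finset.card_insert_of_notMem hbS]
  · exact ⟨insert a S, by simp [Set.insert_subset_iff, haI, hSIcc], by simpa [ha hP] using hgS,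
      (Finset.card_insert_of_notMem haS).ge⟩
  · exact ⟨insert b S, by simp [Set.insert_subset_iff, hbI, hSIcc], by simpa [hb hQ] using hgS,
      (Finset.card_insert_of_notMem hbS).ge⟩
  · exact ⟨S, hSIcc, hgS, le_rfl⟩

/-- Generalized Rolle count: a zero of order `p` at `a`, of order `q` at `b` and `#S` interior
zeros force `#S + min p (m+1) + min q (m+1) - m` zeros of `f^(m)` in `[a, b]`; the interior
ones are `S'`, the endpoints are counted by the two `if`s. -/
lemma exists_finset_Ioo_zeros_dW (hab : a < b) {f : ℝ → ℝ} {N p q : ℕ}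
    (hf : ContDiffOn ℝ N f (Icc a b)) (ha : ∀ j < p, dW a b j f a = 0)
    (hb : ∀ j < q, dW a b j f b = 0) {S : Finset ℝ} (hS : ↑S ⊆ Ioo a b)
    (hfS : ∀ x ∈ S, f x = 0) {m : ℕ} (hm : m ≤ N) :
    ∃ S' : Finset ℝ, ↑S' ⊆ Ioo a b ∧ (∀ x ∈ S', dW a b m f x = 0) ∧
      S.card + min p (m + 1) + min q (m + 1) ≤
        S'.card + m + (if m < p then 1 else 0) + (if m < q then 1 else 0) := by
  induction m with
  | zero => exact ⟨S, hS, by simpa [dW_zero] using hfS, by split_ifs <;> omega⟩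
  | succ m ih =>
    obtain ⟨S₁, hS₁, hzero₁, hcard₁⟩ := ih (by omega)
    obtain ⟨T, hT, hzeroT, hcardT⟩ :=
      exists_finset_Icc_zeros hab hS₁ hzero₁ (m < p) (m < q) (ha m) (hb m)
    obtain ⟨S₂, hS₂, hzero₂, hcard₂⟩ :=
      exists_finset_deriv_zeros (continuousOn_dW hab hf (by omega))
        (fun x hx => (hasDerivWithinAt_dW hab hf hm (Ioo_subset_Icc_self hx)).hasDerivAt
          (Icc_mem_nhds hx.1 hx.2)) hT hzeroT
    exact ⟨S₂, hS₂, hzero₂, by split_ifs at * <;> omega⟩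

lemma eqOn_zero_of_hasDerivWithinAt_zero {f f' : ℝ → ℝ}
    (hf : ∀ x ∈ Icc a b, HasDerivWithinAt f (f' x) (Icc a b) x) (hf' : EqOn f' 0 (Icc a b))
    {x₀ : ℝ} (hx₀ : x₀ ∈ Icc a b) (hfx₀ : f x₀ = 0) : EqOn f 0 (Icc a b) := by
  intro x hx
  have := (convex_Icc a b).norm_image_sub_le_of_norm_hasDerivWithin_le (C := 0) hf
    (fun y hy => by simp [hf' hy]) hx₀ hx
  simpa [hfx₀] using this

theorem pos_of_dW_endpoints (hab : a < b) {h : ℝ → ℝ} {N p q : ℕ}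
    (hh : ContDiffOn ℝ N h (Icc a b)) (hpN : p ≤ N) (hpq : N < p + q)
    (ha : ∀ j < p, dW a b j h a = 0) (hpa : 0 < dW a b p h a) (hb : ∀ j < q, dW a b j h b = 0)
    (hrigid : VanishesOfTwoZerosOn (dW a b N h) (Icc a b)) : ∀ s ∈ Ioo a b, 0 < h s := by
  intro s hs
  by_contra! hs₀
  obtain ⟨z, hz, hz₀⟩ : ∃ z ∈ Ioo a b, h z = 0 := by
    have hpos := eventually_pos_of_dW hab (hh.of_le (by exact_mod_cast hpN)) ha hpa
    obtain ⟨c, hc, hcs⟩ := (hpos.and (Ioo_mem_nhdsGT hs.1)).exists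
    obtain ⟨z, hzc, hz₀⟩ := intermediate_value_Icc' hcs.2.le
      ((continuousOn_dW hab hh (Nat.zero_le N)).mono (Icc_subset_Icc hcs.1.le hs.2.le))
      ⟨by simpa [dW_zero] using hs₀, by simpa [dW_zero] using hc.le⟩
    exact ⟨z, ⟨hcs.1.trans_le hzc.1, hzc.2.trans_lt hs.2⟩, by simpa [dW_zero] using hz₀⟩
  have hzeros : ∀ m ≤ N, ∃ T : Finset ℝ, ↑T ⊆ Icc a b ∧ (∀ x ∈ T, dW a b m h x = 0) ∧
      2 ≤ T.card := by
    intro m hm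
    obtain ⟨S, hS, hzero, hcard⟩ := exists_finset_Ioo_zeros_dW hab hh ha hb
      (S := {z}) (by simpa using hz) (by simpa using hz₀) hm
    obtain ⟨T, hT, hzeroT, hcardT⟩ :=
      exists_finset_Icc_zeros hab hS hzero (m < p) (m < q) (ha m) (hb m)
    refine ⟨T, hT, hzeroT, ?_⟩
    rw [Finset.card_singleton] at hcard
    split_ifs at * <;> omega
  have hvanish : ∀ m ≤ N, EqOn (dW a b m h) 0 (Icc a b) := by
    intro m hm
    refine Nat.decreasingInduction (motive := fun m _ => EqOn (dW a b m h) 0 (Icc a b))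
      (fun m hm ih => ?_) ?_ hm
    · obtain ⟨T, hT, hzero, hcard⟩ := hzeros m hm.le
      obtain ⟨x, hx⟩ := Finset.card_pos.1 (by omega : 0 < T.card)
      exact eqOn_zero_of_hasDerivWithinAt_zero (fun y hy => hasDerivWithinAt_dW hab hh hm hy) ih
        (hT hx) (hzero x hx)
    · obtain ⟨T, hT, hzero, hcard⟩ := hzeros N le_rfl
      obtain ⟨x, hx, y, hy, hxy⟩ := Finset.one_lt_card.1 hcard
      exact hrigid x (hT hx) y (hT hy) hxy (hzero x hx) (hzero y hy)
  exact hpa.ne' (hvanish p hpN (left_mem_Icc.2 hab.le))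

end ZeroCounting

/-- Index shifted by one: `extendedV a b U k i` is `V_{i-1,k}`, padded by `V_{-1,k} = 1` and
`V_{j,k} = 0` for `j > k`, so that all three cases of the recurrence read
`U_{i,k+1} = extendedV k i - extendedV k (i+1)`. -/
def extendedV (a b : ℝ) (U : ℕ → ℕ → ℝ → ℝ) (k i : ℕ) : ℝ → ℝ :=
  if i = 0 then 1 else if i ≤ k + 1 then Vfun a b U (i - 1) k else 0

def extendedVDeriv (a b : ℝ) (U : ℕ → ℕ → ℝ → ℝ) (k i : ℕ) : ℝ → ℝ :=
  if 1 ≤ i ∧ i ≤ k + 1 then fun s => U (i - 1) k s / dInt a b U (i - 1) k else 0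

section ExtendedV

variable {n : ℕ} {u v : ℝ → ℝ} {a b : ℝ} {U : ℕ → ℕ → ℝ → ℝ} {k : ℕ}

lemma Recur.eq_extendedV_sub (hU : Recur n u v a b U) (hk : 1 ≤ k) (hkn : k + 1 ≤ n - 1)
    {i : ℕ} (hi : i ≤ k + 1) : U i (k + 1) = extendedV a b U k i - extendedV a b U k (i + 1) := by
  ext s
  rcases Nat.eq_zero_or_pos i with rfl | hi₀
  · simp [extendedV, hU.rec_zero (k + 1) (by omega) hkn s]
  rcases hi.lt_or_eq with hik | rfl
  · simp [extendedV, hU.rec_mid (k + 1) (by omega) hkn i hi₀ (by omega) s, hi₀.ne', hik.le,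
      Nat.lt_succ_iff.1 hik]
  · simp [extendedV, hU.rec_top (k + 1) (by omega) hkn s]

lemma hasDerivWithinAt_extendedV (hU : ∀ j ≤ k, ContinuousOn (U j k) (Icc a b)) (i : ℕ)
    {x : ℝ} (hx : x ∈ Icc a b) :
    HasDerivWithinAt (extendedV a b U k i) (extendedVDeriv a b U k i x) (Icc a b) x := by
  unfold extendedV extendedVDeriv
  split_ifs
  · omega
  · exact hasDerivWithinAt_const x _ 1
  · exact hasDerivWithinAt_integral ((hU (i - 1) (by omega)).div_const _) hx
  · omega
  · omega
  · exact hasDerivWithinAt_const x _ 0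

lemma extendedV_left (i : ℕ) : extendedV a b U k i a = if i = 0 then 1 else 0 := by
  unfold extendedV
  split_ifs <;> simp [Vfun]

lemma extendedV_right (hd : ∀ j ≤ k, dInt a b U j k ≠ 0) (i : ℕ) :
    extendedV a b U k i b = if i ≤ k + 1 then 1 else 0 := by
  rcases eq_or_ne i 0 with rfl | h₀
  · simp [extendedV]
  by_cases hik : i ≤ k + 1
  · simp only [extendedV, h₀, hik, if_true, if_false]
    unfold Vfun
    rw [intervalIntegral.integral_div, ← dInt, div_self (hd _ (by omega))]
  · simp [extendedV, h₀, hik]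

lemma dW_extendedVDeriv (j i : ℕ) (x : ℝ) :
    dW a b j (extendedVDeriv a b U k i) x =
      if 1 ≤ i ∧ i ≤ k + 1 then dW a b j (U (i - 1) k) x / dInt a b U (i - 1) k else 0 := by
  unfold extendedVDeriv dW
  split_ifs <;> simp [div_eq_mul_inv]

lemma Recur.succ_apply_left (hU : Recur n u v a b U) (hk : 1 ≤ k) (hkn : k + 1 ≤ n - 1)
    {i : ℕ} (hi : i ≤ k + 1) : U i (k + 1) a = if i = 0 then 1 else 0 := by
  rw [hU.eq_extendedV_sub hk hkn hi, Pi.sub_apply, extendedV_left, extendedV_left]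
  simp

lemma Recur.succ_apply_right (hU : Recur n u v a b U) (hk : 1 ≤ k) (hkn : k + 1 ≤ n - 1)
    (hd : ∀ j ≤ k, dInt a b U j k ≠ 0) {i : ℕ} (hi : i ≤ k + 1) :
    U i (k + 1) b = if i = k + 1 then 1 else 0 := by
  rw [hU.eq_extendedV_sub hk hkn hi, Pi.sub_apply, extendedV_right hd, extendedV_right hd]
  split_ifs <;> first | omega | norm_num

end ExtendedV

/-- Induction hypothesis at level `k`; `W` stands for `span ⟨u^(n-2), v^(n-2)⟩`. -/
structure IsLevel (W : Submodule ℝ (ℝ → ℝ)) (a b : ℝ) (U : ℕ → ℕ → ℝ → ℝ) (k : ℕ) : Prop where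
  contDiffOn : ∀ i ≤ k, ContDiffOn ℝ k (U i k) (Icc a b)
  pos : ∀ i ≤ k, ∀ s ∈ Ioo a b, 0 < U i k s
  dW_left_eq_zero : ∀ i ≤ k, ∀ j < i, dW a b j (U i k) a = 0
  dW_right_eq_zero : ∀ i ≤ k, ∀ j, i + j < k → dW a b j (U i k) b = 0
  dW_left_pos : ∀ i < k, 0 < dW a b i (U i k) a
  dW_right_sign : ∀ i, 1 ≤ i → i ≤ k → 0 < (-1) ^ (k - i) * dW a b (k - i) (U i k) b
  dW_mem : ∀ i ≤ k, ∃ g ∈ W, EqOn (dW a b (k - 1) (U i k)) g (Icc a b)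

namespace IsLevel

variable {W : Submodule ℝ (ℝ → ℝ)} {n : ℕ} {u v : ℝ → ℝ} {a b : ℝ} {U : ℕ → ℕ → ℝ → ℝ} {k : ℕ}

lemma dInt_pos (hab : a < b) (L : IsLevel W a b U k) {i : ℕ} (hi : i ≤ k) :
    0 < dInt a b U i k :=
  intervalIntegral.intervalIntegral_pos_of_pos_on
    ((L.contDiffOn i hi).continuousOn.intervalIntegrable_of_Icc hab.le) (L.pos i hi) hab

lemma contDiffOn_extendedVDeriv (L : IsLevel W a b U k) (i : ℕ) :
    ContDiffOn ℝ k (extendedVDeriv a b U k i) (Icc a b) := by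
  unfold extendedVDeriv
  split_ifs
  · exact (L.contDiffOn (i - 1) (by omega)).div_const _
  · exact contDiffOn_const

lemma dW_extendedVDeriv_left_eq_zero (L : IsLevel W a b U k) {i j : ℕ} (hij : j + 1 < i) :
    dW a b j (extendedVDeriv a b U k i) a = 0 := by
  rw [dW_extendedVDeriv]
  split_ifs
  · rw [L.dW_left_eq_zero (i - 1) (by omega) j (by omega), zero_div]
  · rfl

lemma dW_extendedVDeriv_right_eq_zero (L : IsLevel W a b U k) {i j : ℕ} (hij : i + j ≤ k) :
    dW a b j (extendedVDeriv a b U k i) b = 0 := by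
  rw [dW_extendedVDeriv]
  split_ifs
  · rw [L.dW_right_eq_zero (i - 1) (by omega) j (by omega), zero_div]
  · rfl

lemma dW_extendedVDeriv_left_pos (hab : a < b) (L : IsLevel W a b U k) {i : ℕ} (hi : i < k) :
    0 < dW a b i (extendedVDeriv a b U k (i + 1)) a := by
  rw [dW_extendedVDeriv, if_pos (by omega), Nat.add_sub_cancel]
  exact div_pos (L.dW_left_pos i hi) (L.dInt_pos hab hi.le)

lemma dW_extendedVDeriv_right_sign (hab : a < b) (L : IsLevel W a b U k) {i : ℕ} (h₁ : 1 ≤ i)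
    (hik : i ≤ k) :
    0 < (-1) ^ (k - i) * dW a b (k - i) (extendedVDeriv a b U k (i + 1)) b := by
  rw [dW_extendedVDeriv, if_pos (by omega), Nat.add_sub_cancel, mul_div_assoc']
  exact div_pos (L.dW_right_sign i h₁ hik) (L.dInt_pos hab hik)

lemma dW_extendedVDeriv_mem (L : IsLevel W a b U k) (i : ℕ) :
    ∃ g ∈ W, EqOn (dW a b (k - 1) (extendedVDeriv a b U k i)) g (Icc a b) := by
  by_cases hi : 1 ≤ i ∧ i ≤ k + 1
  · obtain ⟨g, hg, hgU⟩ := L.dW_mem (i - 1) (by omega)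
    refine ⟨(dInt a b U (i - 1) k)⁻¹ • g, W.smul_mem _ hg, fun x hx => ?_⟩
    rw [dW_extendedVDeriv, if_pos hi, hgU hx, Pi.smul_apply, smul_eq_mul, div_eq_inv_mul]
  · exact ⟨0, W.zero_mem, fun x _ => by rw [dW_extendedVDeriv, if_neg hi, Pi.zero_apply]⟩

lemma hasDerivWithinAt_succ (hU : Recur n u v a b U) (hk : 1 ≤ k) (hkn : k + 1 ≤ n - 1)
    (L : IsLevel W a b U k) {i : ℕ} (hi : i ≤ k + 1) {x : ℝ} (hx : x ∈ Icc a b) :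
    HasDerivWithinAt (U i (k + 1))
      (extendedVDeriv a b U k i x - extendedVDeriv a b U k (i + 1) x) (Icc a b) x := by
  have hU_cont : ∀ j ≤ k, ContinuousOn (U j k) (Icc a b) := fun j hj =>
    (L.contDiffOn j hj).continuousOn
  rw [hU.eq_extendedV_sub hk hkn hi]
  exact (hasDerivWithinAt_extendedV hU_cont i hx).sub (hasDerivWithinAt_extendedV hU_cont _ hx)

lemma dW_succ_succ (hab : a < b) (hU : Recur n u v a b U) (hk : 1 ≤ k) (hkn : k + 1 ≤ n - 1)
    (L : IsLevel W a b U k) {i j : ℕ} (hi : i ≤ k + 1) (hj : j ≤ k) {x : ℝ}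
    (hx : x ∈ Icc a b) :
    dW a b (j + 1) (U i (k + 1)) x =
      dW a b j (extendedVDeriv a b U k i) x - dW a b j (extendedVDeriv a b U k (i + 1)) x := by
  rw [dW_succ_eq_of_hasDerivWithinAt hab (fun _ hy => L.hasDerivWithinAt_succ hU hk hkn hi hy) j hx]
  exact dW_sub hab ((L.contDiffOn_extendedVDeriv i).of_le (by exact_mod_cast hj))
    ((L.contDiffOn_extendedVDeriv (i + 1)).of_le (by exact_mod_cast hj)) hx

lemma contDiffOn_succ (hab : a < b) (hU : Recur n u v a b U) (hk : 1 ≤ k)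
    (hkn : k + 1 ≤ n - 1) (L : IsLevel W a b U k) {i : ℕ} (hi : i ≤ k + 1) :
    ContDiffOn ℝ (k + 1 : ℕ) (U i (k + 1)) (Icc a b) :=
  contDiffOn_succ_of_hasDerivWithinAt hab (fun _ hx => L.hasDerivWithinAt_succ hU hk hkn hi hx)
    ((L.contDiffOn_extendedVDeriv i).sub (L.contDiffOn_extendedVDeriv (i + 1)))

lemma dW_succ_left_eq_zero (hab : a < b) (hU : Recur n u v a b U) (hk : 1 ≤ k)
    (hkn : k + 1 ≤ n - 1) (L : IsLevel W a b U k) {i j : ℕ} (hi : i ≤ k + 1) (hj : j < i) :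
    dW a b j (U i (k + 1)) a = 0 := by
  cases j with
  | zero => rw [dW_zero, hU.succ_apply_left hk hkn hi, if_neg (by omega)]
  | succ j =>
    rw [L.dW_succ_succ hab hU hk hkn hi (by omega) (left_mem_Icc.2 hab.le),
      L.dW_extendedVDeriv_left_eq_zero (by omega), L.dW_extendedVDeriv_left_eq_zero (by omega),
      sub_zero]

lemma dW_succ_right_eq_zero (hab : a < b) (hU : Recur n u v a b U) (hk : 1 ≤ k)
    (hkn : k + 1 ≤ n - 1) (L : IsLevel W a b U k) {i j : ℕ} (hi : i ≤ k + 1) (hij : i + j < k + 1) :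
    dW a b j (U i (k + 1)) b = 0 := by
  cases j with
  | zero =>
    rw [dW_zero, hU.succ_apply_right hk hkn (fun j hj => (L.dInt_pos hab hj).ne') hi,
      if_neg (by omega)]
  | succ j =>
    rw [L.dW_succ_succ hab hU hk hkn hi (by omega) (right_mem_Icc.2 hab.le),
      L.dW_extendedVDeriv_right_eq_zero (by omega), L.dW_extendedVDeriv_right_eq_zero (by omega),
      sub_zero]

lemma dW_succ_left_pos (hab : a < b) (hU : Recur n u v a b U) (hk : 1 ≤ k)
    (hkn : k + 1 ≤ n - 1) (L : IsLevel W a b U k) {i : ℕ} (hi : i < k + 1) :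
    0 < dW a b i (U i (k + 1)) a := by
  cases i with
  | zero => rw [dW_zero, hU.succ_apply_left hk hkn hi.le, if_pos rfl]; exact one_pos
  | succ i =>
    rw [L.dW_succ_succ hab hU hk hkn hi.le (by omega) (left_mem_Icc.2 hab.le),
      L.dW_extendedVDeriv_left_eq_zero (i := i + 1 + 1) (by omega), sub_zero]
    exact L.dW_extendedVDeriv_left_pos hab (by omega)

lemma dW_succ_right_sign (hab : a < b) (hU : Recur n u v a b U) (hk : 1 ≤ k)
    (hkn : k + 1 ≤ n - 1) (L : IsLevel W a b U k) {i : ℕ} (h₁ : 1 ≤ i) (hi : i ≤ k + 1) :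
    0 < (-1) ^ (k + 1 - i) * dW a b (k + 1 - i) (U i (k + 1)) b := by
  rcases hi.lt_or_eq with hik | rfl
  · rw [show k + 1 - i = k - i + 1 by omega,
      L.dW_succ_succ hab hU hk hkn hi (by omega) (right_mem_Icc.2 hab.le),
      L.dW_extendedVDeriv_right_eq_zero (by omega), pow_succ]
    have := L.dW_extendedVDeriv_right_sign hab h₁ (by omega : i ≤ k)
    linarith
  · rw [Nat.sub_self, pow_zero, one_mul, dW_zero,
      hU.succ_apply_right hk hkn (fun j hj => (L.dInt_pos hab hj).ne') le_rfl, if_pos rfl]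
    exact one_pos

lemma dW_succ_mem (hab : a < b) (hU : Recur n u v a b U) (hk : 1 ≤ k)
    (hkn : k + 1 ≤ n - 1) (L : IsLevel W a b U k) {i : ℕ} (hi : i ≤ k + 1) :
    ∃ g ∈ W, EqOn (dW a b k (U i (k + 1))) g (Icc a b) := by
  obtain ⟨g₁, hg₁, hD₁⟩ := L.dW_extendedVDeriv_mem i
  obtain ⟨g₂, hg₂, hD₂⟩ := L.dW_extendedVDeriv_mem (i + 1)
  refine ⟨g₁ - g₂, W.sub_mem hg₁ hg₂, fun x hx => ?_⟩
  have hdW := L.dW_succ_succ hab hU hk hkn hi (j := k - 1) (by omega) hx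
  rw [Nat.sub_add_cancel hk] at hdW
  rw [hdW, hD₁ hx, hD₂ hx, Pi.sub_apply]

lemma pos_succ (hW : ∀ g ∈ W, VanishesOfTwoZerosOn g (Icc a b)) (hab : a < b)
    (hU : Recur n u v a b U) (hk : 1 ≤ k) (hkn : k + 1 ≤ n - 1) (L : IsLevel W a b U k) {i : ℕ}
    (hi : i ≤ k + 1) : ∀ s ∈ Ioo a b, 0 < U i (k + 1) s := by
  rcases hi.lt_or_eq with hik | rfl
  · obtain ⟨g, hg, hgU⟩ := L.dW_succ_mem hab hU hk hkn hi
    exact pos_of_dW_endpoints hab (q := k + 1 - i)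
      ((L.contDiffOn_succ hab hU hk hkn hi).of_le (by simp)) (by omega) (by omega)
      (fun j hj => L.dW_succ_left_eq_zero hab hU hk hkn hi hj)
      (L.dW_succ_left_pos hab hU hk hkn hik)
      (fun j hj => L.dW_succ_right_eq_zero hab hU hk hkn hi (by omega)) ((hW g hg).congr hgU)
  · intro s hs
    refine pos_of_hasDerivWithinAt_pos (fun x hx => L.hasDerivWithinAt_succ hU hk hkn le_rfl hx)
      (fun x hx => ?_) (by rw [hU.succ_apply_left hk hkn le_rfl, if_neg (by omega)]) s
      (Ioo_subset_Ioc_self hs)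
    simp only [extendedVDeriv, if_pos (by omega : 1 ≤ k + 1 ∧ k + 1 ≤ k + 1),
      if_neg (by omega : ¬(1 ≤ k + 1 + 1 ∧ k + 1 + 1 ≤ k + 1)), Nat.add_sub_cancel]
    exact sub_pos.2 (div_pos (L.pos k le_rfl x hx) (L.dInt_pos hab le_rfl))

theorem succ (hW : ∀ g ∈ W, VanishesOfTwoZerosOn g (Icc a b)) (hab : a < b)
    (hU : Recur n u v a b U) (hk : 1 ≤ k) (hkn : k + 1 ≤ n - 1) (L : IsLevel W a b U k) :
    IsLevel W a b U (k + 1) where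
  contDiffOn _ := L.contDiffOn_succ hab hU hk hkn
  pos _ := L.pos_succ hW hab hU hk hkn
  dW_left_eq_zero _ hi _ := L.dW_succ_left_eq_zero hab hU hk hkn hi
  dW_right_eq_zero _ hi _ := L.dW_succ_right_eq_zero hab hU hk hkn hi
  dW_left_pos _ := L.dW_succ_left_pos hab hU hk hkn
  dW_right_sign _ h₁ := L.dW_succ_right_sign hab hU hk hkn h₁
  dW_mem _ := L.dW_succ_mem hab hU hk hkn

end IsLevel

section Base

variable {n : ℕ} {u v : ℝ → ℝ} {a b : ℝ} {U : ℕ → ℕ → ℝ → ℝ}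

lemma CondC1.vanishesOfTwoZerosOn (hab : a < b) (hC1 : CondC1 n u v a b)
    (hu : ContDiffOn ℝ (n - 2 : ℕ) u (Icc a b)) (hv : ContDiffOn ℝ (n - 2 : ℕ) v (Icc a b))
    {g : ℝ → ℝ} (hg : g ∈ Submodule.span ℝ {dW a b (n - 2) u, dW a b (n - 2) v}) :
    VanishesOfTwoZerosOn g (Icc a b) := by
  obtain ⟨α, β, rfl⟩ := Submodule.mem_span_pair.1 hg
  have hψ : α • u + β • v ∈ Pspace n u v :=
    add_mem (Submodule.smul_mem _ α (Submodule.subset_span (by simp [genSet])))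
      (Submodule.smul_mem _ β (Submodule.subset_span (by simp [genSet])))
  refine VanishesOfTwoZerosOn.congr (hC1 _ hψ) fun x hx => ?_
  have hsum := iteratedDerivWithin_add (f := α • u) (g := β • v) hx (uniqueDiffOn_Icc hab)
    ((hu.const_smul α) x hx) ((hv.const_smul β) x hx)
  simp only [dW, hsum, iteratedDerivWithin_const_smul_field, Pi.add_apply, Pi.smul_apply]

lemma isLevel_one (hab : a < b) (hu : ContDiffOn ℝ (n - 2 + 1 : ℕ) u (Icc a b))
    (hv : ContDiffOn ℝ (n - 2 + 1 : ℕ) v (Icc a b)) (hU : Recur n u v a b U) :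
    IsLevel (Submodule.span ℝ {dW a b (n - 2) u, dW a b (n - 2) v}) a b U 1 := by
  have hW : ∀ g ∈ Submodule.span ℝ {dW a b (n - 2) u, dW a b (n - 2) v},
      ContDiffOn ℝ (1 : ℕ) g (Icc a b) := by
    have hone : ∀ w : ℝ → ℝ, ContDiffOn ℝ (n - 2 + 1 : ℕ) w (Icc a b) →
        ContDiffOn ℝ (1 : ℕ) (dW a b (n - 2) w) (Icc a b) := fun w hw =>
      ((contDiffOn_nat_succ_iff_contDiffOn_one_iteratedDerivWithin (uniqueDiffOn_Icc hab)).1 hw).2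
    intro g hg
    obtain ⟨α, β, rfl⟩ := Submodule.mem_span_pair.1 hg
    exact ((hone u hu).const_smul α).add ((hone v hv).const_smul β)
  refine ⟨fun i hi => ?_, fun i hi s hs => ?_, fun i hi j hj => ?_, fun i hi j hij => ?_,
    fun i hi => ?_, fun i h₁ hi => ?_, fun i hi => ?_⟩
  · obtain rfl | rfl := Nat.le_one_iff_eq_zero_or_eq_one.1 hi
    exacts [hW _ hU.base₀_mem, hW _ hU.base₁_mem]
  · obtain rfl | rfl := Nat.le_one_iff_eq_zero_or_eq_one.1 hi
    exacts [(hU.base_pos s hs).1, (hU.base_pos s hs).2]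
  · obtain ⟨rfl, rfl⟩ : i = 1 ∧ j = 0 := by omega
    rw [dW_zero, hU.base₁_a]
  · obtain ⟨rfl, rfl⟩ : i = 0 ∧ j = 0 := by omega
    rw [dW_zero, hU.base₀_b]
  · obtain rfl : i = 0 := by omega
    rw [dW_zero, hU.base₀_a]
    exact one_pos
  · obtain rfl : i = 1 := by omega
    rw [Nat.sub_self, pow_zero, one_mul, dW_zero, hU.base₁_b]
    exact one_pos
  · refine ⟨U i 1, ?_, fun x _ => by rw [Nat.sub_self, dW_zero]⟩
    obtain rfl | rfl := Nat.le_one_iff_eq_zero_or_eq_one.1 hi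
    exacts [hU.base₀_mem, hU.base₁_mem]

end Base

theorem statement4_general (n : ℕ) (hn : 3 ≤ n) (a b : ℝ) (hab : a < b) (u v : ℝ → ℝ)
    (hu : ContDiffOn ℝ n u (Set.Icc a b)) (hv : ContDiffOn ℝ n v (Set.Icc a b))
    (hC1 : CondC1 n u v a b)
    (U : ℕ → ℕ → ℝ → ℝ) (hU : Recur n u v a b U) :
    (∀ k, 2 ≤ k → k ≤ n - 1 →
      (∀ i < k, dW a b i (U i k) a ≠ 0) ∧
      (∀ i, 1 ≤ i → i ≤ k → dW a b (k - i) (U i k) b ≠ 0)) ∧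
    ((∀ i ≤ n - 2, dW a b i (U i (n - 1)) a ≠ 0) ∧
     (∀ i, 1 ≤ i → i ≤ n - 1 → dW a b (n - i - 1) (U i (n - 1)) b ≠ 0)) := by
  have hu' : ContDiffOn ℝ (n - 2 + 1 : ℕ) u (Icc a b) := hu.of_le (by norm_cast; omega)
  have hv' : ContDiffOn ℝ (n - 2 + 1 : ℕ) v (Icc a b) := hv.of_le (by norm_cast; omega)
  set W : Submodule ℝ (ℝ → ℝ) := Submodule.span ℝ {dW a b (n - 2) u, dW a b (n - 2) v}
  have hW : ∀ g ∈ W, VanishesOfTwoZerosOn g (Icc a b) := fun g hg =>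
    hC1.vanishesOfTwoZerosOn hab (hu'.of_le (by norm_cast; omega))
      (hv'.of_le (by norm_cast; omega)) hg
  have hlevel : ∀ k, 1 ≤ k → k ≤ n - 1 → IsLevel W a b U k := by
    intro k hk hkn
    induction k, hk using Nat.le_induction with
    | base => exact isLevel_one hab hu' hv' hU
    | succ k hk ih => exact (ih (by omega)).succ hW hab hU hk hkn
  have hmain : ∀ k, 2 ≤ k → k ≤ n - 1 → (∀ i < k, dW a b i (U i k) a ≠ 0) ∧
      (∀ i, 1 ≤ i → i ≤ k → dW a b (k - i) (U i k) b ≠ 0) := fun k hk hkn =>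
    ⟨fun i hi => ((hlevel k (by omega) hkn).dW_left_pos i hi).ne',
      fun i h₁ hi => right_ne_zero_of_mul ((hlevel k (by omega) hkn).dW_right_sign i h₁ hi).ne'⟩
  refine ⟨hmain, fun i hi => (hmain (n - 1) (by omega) le_rfl).1 i (by omega), fun i h₁ hi => ?_⟩
  rw [Nat.sub_right_comm]
  exact (hmain (n - 1) (by omega) le_rfl).2 i h₁ hi

/-- Non-vanishing of the critical derivatives of `U_{i,k,n-1}` at the
endpoints: `U_{i,k,n-1}^(i)(a) ≠ 0` for `i = 0, ..., k-1` and `U_{i,k,n-1}^(k-i)(b) ≠ 0`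
for `i = 1, ..., k`; in particular for `B_{i,n-1} := U_{i,n-1,n-1}`:
`B_{i,n-1}^(i)(a) ≠ 0` for `i = 0, ..., n-2` and `B_{i,n-1}^(n-i-1)(b) ≠ 0` for
`i = 1, ..., n-1`. -/
theorem statement4 (n : ℕ) (hn : 3 ≤ n) (a b : ℝ) (hab : a < b) (u v : ℝ → ℝ)
    (hu : ContDiffOn ℝ n u (Set.Icc a b)) (hv : ContDiffOn ℝ n v (Set.Icc a b))
    (hdim : dimP n u v a b = n) (hC1 : CondC1 n u v a b)
    (U : ℕ → ℕ → ℝ → ℝ) (hU : Recur n u v a b U) :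
    (∀ k, 2 ≤ k → k ≤ n - 1 →
      (∀ i < k, dW a b i (U i k) a ≠ 0) ∧
      (∀ i, 1 ≤ i → i ≤ k → dW a b (k - i) (U i k) b ≠ 0)) ∧
    ((∀ i ≤ n - 2, dW a b i (U i (n - 1)) a ≠ 0) ∧
     (∀ i, 1 ≤ i → i ≤ n - 1 → dW a b (n - i - 1) (U i (n - 1)) b ≠ 0)) :=
  statement4_general n hn a b hab u v hu hv hC1 U hU
end
end

section
/- Let r₁, r₂ ≥ 0 and n₁ > r₁, n₂ > r₂ be integers. Let B₀, ..., B_{n₁-1} be C^{r₁} functions on an interval containing the point a, satisfying B_i^{(h)}(a) = 0 for all h < i and B_i^{(i)}(a) ≠ 0 (for each i with i ≤ r₁), and let C₀, ..., C_{n₂-1} be C^{r₂} functions on an interval containing the point c, satisfying C_j^{(k)}(c) = 0 for all k < j and C_j^{(j)}(c) ≠ 0 (for each j with j ≤ r₂). Then the linear map sending a coefficient array (c_{ij})_{0 ≤ i ≤ r₁, 0 ≤ j ≤ r₂} to the array of partial derivatives (D_s^h D_t^k p(a,c))_{0 ≤ h ≤ r₁, 0 ≤ k ≤ r₂} of p(s,t)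 := Σ_{i=0}^{r₁} Σ_{j=0}^{r₂} c_{ij} B_i(s) C_j(t) is a linear bijection; in particular, for any prescribed values of the mixed partial derivatives D_s^h D_t^k at (a,c) with 0 ≤ h ≤ r₁ and 0 ≤ k ≤ r₂, the coefficients (c_{ij}) are uniquely determined. -/
/-!
Differentiating `p` term by term, `D_s^h D_t^k p(a,c) = Σᵢⱼ B_i^{(h)}(a) c_{ij} C_j^{(k)}(c)`,
so the corner map is `X ↦ M X Nᵀ` with `M_{hi} = B_i^{(h)}(a)` and `N_{kj} = C_j^{(k)}(c)`.
The vanishing conditions make `M` and `N` lower triangular, and their diagonals are nonzero,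
so both are invertible.
-/

noncomputable section

/-- The mixed partial derivative `D_s^h D_t^k p (a, c)` of a function of two real
variables. -/
def mixedPartial (h k : ℕ) (p : ℝ → ℝ → ℝ) (a c : ℝ) : ℝ :=
  iteratedDeriv h (fun s => iteratedDeriv k (fun t => p s t) c) a

theorem iteratedDeriv_fun_sum_mul {ι 𝕜 : Type*} [NontriviallyNormedField 𝕜] {n : ℕ} {x : 𝕜}
    (s : Finset ι) (w : ι → 𝕜) {f : ι → 𝕜 → 𝕜} (hf : ∀ i ∈ s, ContDiffAt 𝕜 n (f i) x) :
    iteratedDeriv n (fun y => ∑ i ∈ s, w i * f i y) x =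
      ∑ i ∈ s, w i * iteratedDeriv n (f i) x := by
  rw [iteratedDeriv_fun_sum fun i hi => contDiffAt_const.mul (hf i hi)]
  simp only [iteratedDeriv_const_mul_field]

theorem mixedPartial_tensor_sum {ι κ : Type*} [Fintype ι] [Fintype κ] {h k : ℕ} {a c : ℝ}
    {B : ι → ℝ → ℝ} {C : κ → ℝ → ℝ} (hB : ∀ i, ContDiffAt ℝ h (B i) a)
    (hC : ∀ j, ContDiffAt ℝ k (C j) c) (cf : ι → κ → ℝ) :
    mixedPartial h k (fun s t => ∑ i, ∑ j, cf i j * B i s * C j t) a c =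
      ∑ i, ∑ j, iteratedDeriv h (B i) a * cf i j * iteratedDeriv k (C j) c := by
  have hinner (s : ℝ) : iteratedDeriv k (fun t => ∑ i, ∑ j, cf i j * B i s * C j t) c =
      ∑ ij : ι × κ, cf ij.1 ij.2 * iteratedDeriv k (C ij.2) c * B ij.1 s := by
    simp only [← Fintype.sum_prod_type']
    rw [iteratedDeriv_fun_sum_mul _ _ fun ij _ => hC ij.2]
    exact Finset.sum_congr rfl fun _ _ => by ring
  simp only [mixedPartial, hinner]
  rw [iteratedDeriv_fun_sum_mul _ _ fun ij _ => hB ij.1, ← Fintype.sum_prod_type']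
  exact Finset.sum_congr rfl fun _ _ => by ring

def jetMatrix {𝕜 : Type*} [NontriviallyNormedField 𝕜] (r : ℕ) (B : ℕ → 𝕜 → 𝕜) (a : 𝕜) :
    Matrix (Fin (r + 1)) (Fin (r + 1)) 𝕜 :=
  Matrix.of fun h i => iteratedDeriv h (B i) a

theorem isUnit_jetMatrix {𝕜 : Type*} [NontriviallyNormedField 𝕜] {r : ℕ} {B : ℕ → 𝕜 → 𝕜}
    {a : 𝕜}
    (hBa : ∀ i ≤ r, (∀ h < i, iteratedDeriv h (B i) a = 0) ∧ iteratedDeriv i (B i) a ≠ 0) :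
    IsUnit (jetMatrix r B a) := by
  have htri : (jetMatrix r B a).IsLowerTriangular := fun h i hi => (hBa i i.is_le).1 h hi
  rw [Matrix.isUnit_iff_isUnit_det, Matrix.det_of_isLowerTriangular _ htri, isUnit_iff_ne_zero]
  exact Finset.prod_ne_zero_iff.mpr fun i _ => (hBa i i.is_le).2

theorem Matrix.bijective_mul_mul_of_isUnit {m n R : Type*} [Fintype m] [DecidableEq m]
    [Fintype n] [DecidableEq n] [Semiring R] {M : Matrix m m R} {N : Matrix n n R}
    (hM : IsUnit M) (hN : IsUnit N) : Function.Bijective fun X : Matrix m n R => M * X * N := by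
  obtain ⟨u, rfl⟩ := hM
  obtain ⟨v, rfl⟩ := hN
  refine Function.bijective_iff_has_inverse.mpr
    ⟨fun Y => (↑u⁻¹ : Matrix m m R) * Y * (↑v⁻¹ : Matrix n n R), fun X => ?_, fun Y => ?_⟩
  · simp [Matrix.mul_assoc, ← Matrix.mul_assoc (↑u⁻¹ : Matrix m m R)]
  · simp [Matrix.mul_assoc, ← Matrix.mul_assoc (↑u : Matrix m m R)]

/-- The corner linear system: the map from tensor-product coefficients
`(c_{ij})_{i ≤ r₁, j ≤ r₂}` to the mixed partial derivatives
`(D_s^h D_t^k p(a,c))_{h ≤ r₁, k ≤ r₂}` of `p(s,t) = Σᵢⱼ c_{ij} Bᵢ(s) Cⱼ(t)` is a linear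
bijection; in particular the coefficients are uniquely determined by any prescribed
values of these mixed partial derivatives. -/
theorem statement5 (r₁ r₂ n₁ n₂ : ℕ) (hn₁ : r₁ < n₁) (hn₂ : r₂ < n₂) (a c : ℝ)
    (B C : ℕ → ℝ → ℝ)
    (hB : ∀ i < n₁, ContDiff ℝ r₁ (B i))
    (hC : ∀ j < n₂, ContDiff ℝ r₂ (C j))
    (hBa : ∀ i ≤ r₁, (∀ h < i, iteratedDeriv h (B i) a = 0) ∧ iteratedDeriv i (B i) a ≠ 0)
    (hCc : ∀ j ≤ r₂, (∀ k < j, iteratedDeriv k (C j) c = 0) ∧ iteratedDeriv j (C j) c ≠ 0) :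
    (Function.Bijective
      (fun (cf : Fin (r₁ + 1) → Fin (r₂ + 1) → ℝ) (h : Fin (r₁ + 1)) (k : Fin (r₂ + 1)) =>
        mixedPartial h.1 k.1
          (fun s t => ∑ i : Fin (r₁ + 1), ∑ j : Fin (r₂ + 1), cf i j * B i.1 s * C j.1 t)
          a c)) ∧
    (∀ d : Fin (r₁ + 1) → Fin (r₂ + 1) → ℝ,
      ∃! cf : Fin (r₁ + 1) → Fin (r₂ + 1) → ℝ,
        ∀ (h : Fin (r₁ + 1)) (k : Fin (r₂ + 1)),
          mixedPartial h.1 k.1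
            (fun s t => ∑ i : Fin (r₁ + 1), ∑ j : Fin (r₂ + 1), cf i j * B i.1 s * C j.1 t)
            a c = d h k) := by
  have hBh (h i : Fin (r₁ + 1)) : ContDiffAt ℝ h.1 (B i.1) a :=
    (hB i (i.is_le.trans_lt hn₁)).contDiffAt.of_le (by exact_mod_cast h.is_le)
  have hCk (k j : Fin (r₂ + 1)) : ContDiffAt ℝ k.1 (C j.1) c :=
    (hC j (j.is_le.trans_lt hn₂)).contDiffAt.of_le (by exact_mod_cast k.is_le)
  set F := fun (cf : Fin (r₁ + 1) → Fin (r₂ + 1) → ℝ) (h : Fin (r₁ + 1)) (k : Fin (r₂ + 1)) =>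
    mixedPartial h.1 k.1
      (fun s t => ∑ i : Fin (r₁ + 1), ∑ j : Fin (r₂ + 1), cf i j * B i.1 s * C j.1 t) a c
  have hmatrix : F = fun cf =>
      (jetMatrix r₁ B a * Matrix.of cf * (jetMatrix r₂ C c).transpose : Matrix _ _ ℝ) := by
    funext cf h k
    refine (mixedPartial_tensor_sum (hBh h) (hCk k) cf).trans ?_
    simp only [Matrix.mul_apply, Matrix.transpose_apply, jetMatrix, Matrix.of_apply,
      Finset.sum_mul]
    exact Finset.sum_comm
  have hbij : Function.Bijective F := by
    rw [hmatrix]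
    exact Matrix.bijective_mul_mul_of_isUnit (isUnit_jetMatrix hBa)
      ((Matrix.isUnit_transpose _).mpr (isUnit_jetMatrix hCc))
  refine ⟨hbij, fun d => ?_⟩
  exact (existsUnique_congr fun _ => by simp only [F, funext_iff]).mp
    ((Function.bijective_iff_existsUnique F).mp hbij d)
end
end

section
/- Let n ≥ 3, let α, β be real numbers with β > 0, and set u(s) = e^{α s} cos(β s), v(s) = e^{α s} sin(β s) on [a,b]. Then the space P^n_{u,v}([a,b]) satisfies condition (C2) for any interval [a,b]; moreover, if β(b − a) < π, then it also satisfies condition (C1). -/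
open Set

noncomputable section

/-! Write `u + i v = e^{λ s}` with `λ = α + iβ`. Differentiation kills the polynomial part of
`ψ ∈ P^n_{u,v}` and multiplies `Re (c e^{λ s})` by `λ`, so on `[a, b]` the `(n-2)`-th derivative
of `ψ` is `Re (w e^{λ s})` for one complex constant `w`, and the `(n-1)`-th is `Re (λ w e^{λ s})`.
A common zero of these two forces `w = 0` because `Im λ = β ≠ 0`. At two zeros `s₁ ≠ s₂` the
number `z = w e^{λ s₁}` is purely imaginary and `0 = Re (z e^{λ τ}) = -Im z · e^{ατ} sin (βτ)`
with `τ = s₂ - s₁`; the bound `|βτ| < π` keeps the sine away from zero, so again `w = 0`. -/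

open Complex Polynomial
open scoped ContDiff Real

lemma hasDerivAt_re_mul_cexp (c l : ℂ) (t : ℝ) :
    HasDerivAt (fun s : ℝ => (c * cexp (l * s)).re) (c * l * cexp (l * t)).re t := by
  have h : HasDerivAt (fun z : ℂ => c * cexp (l * z)) (c * l * cexp (l * t)) t := by
    simpa [mul_comm, mul_left_comm, mul_assoc] using
      (((hasDerivAt_id (t : ℂ)).const_mul l).cexp).const_mul c
  exact h.real_of_complex

lemma iteratedDeriv_re_mul_cexp_add_eval (k : ℕ) (c l : ℂ) (p : ℝ[X]) :
    iteratedDeriv k (fun t : ℝ => (c * cexp (l * t)).re + p.eval t) =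
      fun t : ℝ => (c * l ^ k * cexp (l * t)).re + (derivative^[k] p).eval t := by
  induction k generalizing c p with
  | zero => simp
  | succ k ih =>
    have hderiv : deriv (fun t : ℝ => (c * cexp (l * t)).re + p.eval t) =
        fun t : ℝ => (c * l * cexp (l * t)).re + (derivative p).eval t :=
      funext fun t => ((hasDerivAt_re_mul_cexp c l t).add (p.hasDerivAt t)).deriv
    rw [iteratedDeriv_succ', hderiv, ih, Function.iterate_succ_apply]
    simp only [pow_succ', mul_assoc]

lemma contDiff_re_mul_cexp_add_eval (c l : ℂ) (p : ℝ[X]) :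
    ContDiff ℝ ω fun t : ℝ => (c * cexp (l * t)).re + p.eval t := by
  have hexp : ContDiff ℝ ω fun t : ℝ => c * cexp (l * t) :=
    contDiff_const.mul (contDiff_const.mul ofRealCLM.contDiff).cexp
  exact (reCLM.contDiff.comp hexp).add (by simpa using p.contDiff_aeval (𝕜 := ℝ) ω)

lemma span_monomials_le_map_degreeLT (n : ℕ) :
    Submodule.span ℝ {f : ℝ → ℝ | ∃ i : ℕ, i + 3 ≤ n ∧ f = fun s : ℝ => s ^ i} ≤
      (degreeLT ℝ (n - 2)).map (LinearMap.pi fun s : ℝ => leval s) := by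
  rw [Submodule.span_le]
  rintro f ⟨i, hi, rfl⟩
  refine ⟨X ^ i, ?_, by ext s; simp [leval]⟩
  rw [SetLike.mem_coe, mem_degreeLT, degree_X_pow]
  exact_mod_cast (by omega : i < n - 2)

lemma exists_eq_re_mul_cexp_add_eval_of_mem_Pspace {n : ℕ} {l : ℂ} {ψ : ℝ → ℝ}
    (hψ : ψ ∈ Pspace n (fun t : ℝ => (cexp (l * t)).re) (fun t : ℝ => (cexp (l * t)).im)) :
    ∃ (c : ℂ) (p : ℝ[X]), p.degree < ↑(n - 2) ∧
      ψ = fun t : ℝ => (c * cexp (l * t)).re + p.eval t := by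
  obtain ⟨c₁, _, hφ, rfl⟩ := Submodule.mem_span_insert.mp hψ
  obtain ⟨c₂, _, hpoly, rfl⟩ := Submodule.mem_span_insert.mp hφ
  obtain ⟨p, hp, rfl⟩ := span_monomials_le_map_degreeLT n hpoly
  refine ⟨c₁ - c₂ * I, p, mem_degreeLT.mp hp, ?_⟩
  ext t
  simp [leval, mul_re, add_assoc]

lemma exists_dW_eq_re_mul_cexp_of_mem_Pspace {n : ℕ} {l : ℂ} {a b : ℝ} (hab : a < b)
    {ψ : ℝ → ℝ}
    (hψ : ψ ∈ Pspace n (fun t : ℝ => (cexp (l * t)).re) (fun t : ℝ => (cexp (l * t)).im)) :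
    ∃ w : ℂ, ∀ k : ℕ, ∀ t ∈ Icc a b,
      dW a b (n - 2 + k) ψ t = (w * l ^ k * cexp (l * t)).re := by
  obtain ⟨c, p, hp, rfl⟩ := exists_eq_re_mul_cexp_add_eval_of_mem_Pspace hψ
  refine ⟨c * l ^ (n - 2), fun k t ht => ?_⟩
  have hdeg : p.degree < ↑(n - 2 + k) := hp.trans_le (by exact_mod_cast Nat.le_add_right _ _)
  rw [dW, iteratedDerivWithin_eq_iteratedDeriv (uniqueDiffOn_Icc hab)
      ((contDiff_re_mul_cexp_add_eval c l p).contDiffAt.of_le le_top) ht,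
    iteratedDeriv_re_mul_cexp_add_eval, iterate_derivative_eq_zero_of_degree_lt hdeg]
  simp [pow_add, mul_assoc]

lemma eq_zero_of_re_eq_zero_of_re_mul_eq_zero {l w : ℂ} (hl : l.im ≠ 0) (h₀ : w.re = 0)
    (h₁ : (l * w).re = 0) : w = 0 := by
  have him : l.im * w.im = 0 := by simpa [mul_re, h₀] using h₁
  exact Complex.ext h₀ (by simpa [hl] using him)

lemma eq_zero_of_re_mul_cexp_eq_zero {l w : ℂ} {s₁ s₂ : ℝ} (hl : l.im ≠ 0) (hs : s₁ ≠ s₂)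
    (hπ : |l.im * (s₂ - s₁)| < π) (h₁ : (w * cexp (l * s₁)).re = 0)
    (h₂ : (w * cexp (l * s₂)).re = 0) : w = 0 := by
  set z := w * cexp (l * s₁) with hz
  have hsin : Real.sin (l.im * (s₂ - s₁)) ≠ 0 := by
    rw [Ne, Real.sin_eq_zero_iff_of_lt_of_lt (abs_lt.mp hπ).1 (abs_lt.mp hπ).2]
    exact mul_ne_zero hl (sub_ne_zero.mpr hs.symm)
  have hshift : w * cexp (l * s₂) = z * cexp (l * (s₂ - s₁ : ℝ)) := by
    rw [hz, mul_assoc, ← Complex.exp_add]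
    push_cast
    ring_nf
  have him : z.im * (Real.exp (l.re * (s₂ - s₁)) * Real.sin (l.im * (s₂ - s₁))) = 0 := by
    rw [hshift, mul_re, h₁, exp_im] at h₂
    simpa [mul_im] using h₂
  have hz0 : z = 0 := Complex.ext h₁ (by simpa [hsin, Real.exp_ne_zero] using him)
  simpa [hz, Complex.exp_ne_zero] using hz0

theorem condC2_re_im_cexp {n : ℕ} (hn : 2 ≤ n) {a b : ℝ} (hab : a < b) {l : ℂ}
    (hl : l.im ≠ 0) :
    CondC2 n (fun t : ℝ => (cexp (l * t)).re) (fun t : ℝ => (cexp (l * t)).im) a b := by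
  intro ψ hψ s₁ hs₁ h₀ h₁ s hs
  obtain ⟨w, hw⟩ := exists_dW_eq_re_mul_cexp_of_mem_Pspace hab hψ
  have hs₁' : s₁ ∈ Icc a b := Ioo_subset_Icc_self hs₁
  have hw₀ : ∀ t ∈ Icc a b, dW a b (n - 2) ψ t = (w * cexp (l * t)).re := by simpa using hw 0
  rw [show n - 1 = n - 2 + 1 by omega, hw 1 s₁ hs₁'] at h₁
  rw [hw₀ s₁ hs₁'] at h₀
  have hwexp : w * cexp (l * s₁) = 0 :=
    eq_zero_of_re_eq_zero_of_re_mul_eq_zero hl h₀ (by rw [← h₁]; ring_nf)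
  rw [hw₀ s hs, (mul_eq_zero.mp hwexp).resolve_right (Complex.exp_ne_zero _)]
  simp

theorem condC1_re_im_cexp {n : ℕ} {a b : ℝ} (hab : a < b) {l : ℂ} (hl : l.im ≠ 0)
    (hπ : |l.im| * (b - a) < π) :
    CondC1 n (fun t : ℝ => (cexp (l * t)).re) (fun t : ℝ => (cexp (l * t)).im) a b := by
  intro ψ hψ s₁ hs₁ s₂ hs₂ hne h₁ h₂ s hs
  obtain ⟨w, hw⟩ := exists_dW_eq_re_mul_cexp_of_mem_Pspace hab hψ
  have hw₀ : ∀ t ∈ Icc a b, dW a b (n - 2) ψ t = (w * cexp (l * t)).re := by simpa using hw 0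
  rw [hw₀ s₁ hs₁] at h₁
  rw [hw₀ s₂ hs₂] at h₂
  have hdist : |l.im * (s₂ - s₁)| < π := by
    rw [abs_mul]
    refine lt_of_le_of_lt (mul_le_mul_of_nonneg_left ?_ (abs_nonneg _)) hπ
    exact abs_sub_le_iff.mpr ⟨by linarith [hs₂.2, hs₁.1], by linarith [hs₁.2, hs₂.1]⟩
  rw [hw₀ s hs, eq_zero_of_re_mul_cexp_eq_zero hl hne hdist h₁ h₂]
  simp

/-- For `u(s) = e^{αs} cos(βs)`, `v(s) = e^{αs} sin(βs)` with `β > 0`,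
the space `P^n_{u,v}([a,b])` satisfies condition (C2) for any interval `[a,b]`, and it
also satisfies condition (C1) whenever `β(b - a) < π`. -/
theorem statement13 (n : ℕ) (hn : 3 ≤ n) (a b : ℝ) (hab : a < b) (α β : ℝ) (hβ : 0 < β) :
    CondC2 n (fun s : ℝ => Real.exp (α * s) * Real.cos (β * s))
      (fun s : ℝ => Real.exp (α * s) * Real.sin (β * s)) a b ∧
    (β * (b - a) < Real.pi →
      CondC1 n (fun s : ℝ => Real.exp (α * s) * Real.cos (β * s))
        (fun s : ℝ => Real.exp (α * s) * Real.sin (β * s)) a b) := by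
  set l : ℂ := α + β * I
  have hl : l.im = β := by simp [l]
  have hu : (fun s : ℝ => Real.exp (α * s) * Real.cos (β * s)) =
      fun t : ℝ => (cexp (l * t)).re := by
    ext t
    simp [l, exp_re, mul_re, mul_im]
  have hv : (fun s : ℝ => Real.exp (α * s) * Real.sin (β * s)) =
      fun t : ℝ => (cexp (l * t)).im := by
    ext t
    simp [l, exp_im, mul_re, mul_im]
  rw [hu, hv]
  exact ⟨condC2_re_im_cexp (by omega) hab (hl ▸ hβ.ne'), fun hπ =>
    condC1_re_im_cexp hab (hl ▸ hβ.ne') (by rwa [hl, abs_of_pos hβ])⟩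
end
end

section
/- Let n ≥ 3 and let u, v ∈ C^n([a,b]) be such that dim P^n_{u,v}([a,b]) = n and conditions (C1) and (C2) hold. Then for every f ∈ C^n([a,b]) and every s₀ ∈ (a,b), there exists a unique Q ∈ P^n_{u,v}([a,b]) such that Q^{(k)}(s₀) = f^{(k)}(s₀) for all k = 0, 1, ..., n-1; moreover, for all s ∈ [a,b], |f(s) − Q(s)| ≤ (M/n!) |s − s₀|^n, where M = sup_{t ∈ [a,b]} |f^{(n)}(t) − Q^{(n)}(t)|. -/
open Set

noncomputable section

/-!
Condition (C2) kills the `(n-2)`-th derivative of any `ψ ∈ P^n_{u,v}` whose `(n-1)`-jet at `s₀`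
vanishes, and then the vanishing lower derivatives at `s₀` force `ψ = 0` on `[a,b]`. So the jet map
`ψ ↦ (ψ^(k)(s₀))_{k<n}` and the restriction map to `[a,b]` have the same kernel on `P^n_{u,v}`;
since the restrictions span an `n`-dimensional space, the jet map onto `ℝⁿ` is surjective, which
gives the interpolant, and injective modulo restriction, which gives uniqueness. The error bound is
the Taylor estimate for `f - Q`, obtained by integrating `n` times from `s₀`.
-/

open MeasureTheory

lemma abs_le_of_abs_derivWithin_le_mul_abs_pow {a b s₀ C : ℝ} {m : ℕ} {h : ℝ → ℝ}
    (hs₀ : s₀ ∈ Icc a b) (hh : DifferentiableOn ℝ h (Icc a b))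
    (hh' : ContinuousOn (derivWithin h (Icc a b)) (Icc a b)) (h0 : h s₀ = 0)
    (hC : ∀ t ∈ Icc a b, |derivWithin h (Icc a b) t| ≤ C * |t - s₀| ^ m) :
    ∀ s ∈ Icc a b, |h s| ≤ C * (|s - s₀| ^ (m + 1) / (m + 1)) := by
  intro s hs
  have hsub : uIcc s₀ s ⊆ Icc a b := uIcc_subset_Icc hs₀ hs
  have hderiv : ∀ x ∈ Ioo (min s₀ s) (max s₀ s),
      HasDerivAt h (derivWithin h (Icc a b) x) x := fun x hx =>
    (hh x (hsub (Ioo_subset_Icc_self hx))).hasDerivWithinAt.hasDerivAt <|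
      Icc_mem_nhds (lt_of_le_of_lt (le_min hs₀.1 hs.1) hx.1)
        (lt_of_lt_of_le hx.2 (max_le hs₀.2 hs.2))
  have hftc : ∫ t in s₀..s, derivWithin h (Icc a b) t = h s := by
    rw [intervalIntegral.integral_eq_sub_of_hasDeriv_right (hh.continuousOn.mono hsub)
      (fun x hx => (hderiv x hx).hasDerivWithinAt) ((hh'.mono hsub).intervalIntegrable), h0,
      sub_zero]
  have hbound : ∀ᵐ t ∂volume.restrict (uIoc s₀ s),
      ‖derivWithin h (Icc a b) t‖ ≤ C * |t - s₀| ^ m :=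
    (ae_restrict_mem measurableSet_uIoc).mono fun t ht => hC t (hsub (uIoc_subset_uIcc ht))
  calc |h s| = ‖∫ t in uIoc s₀ s, derivWithin h (Icc a b) t‖ := by
        rw [← intervalIntegral.norm_integral_eq_norm_integral_uIoc, hftc, Real.norm_eq_abs]
    _ ≤ ∫ t in uIoc s₀ s, C * |t - s₀| ^ m :=
        norm_integral_le_of_norm_le
          (by fun_prop : Continuous fun t => C * |t - s₀| ^ m).integrableOn_uIoc hbound
    _ = C * (|s - s₀| ^ (m + 1) / (m + 1)) := by
        rw [integral_const_mul, integral_pow_abs_sub_uIoc]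

lemma abs_le_div_factorial_mul_abs_pow {a b s₀ M : ℝ} {n : ℕ} {g : ℝ → ℝ} (hab : a < b)
    (hs₀ : s₀ ∈ Icc a b) (hg : ContDiffOn ℝ n g (Icc a b))
    (hg₀ : ∀ k < n, iteratedDerivWithin k g (Icc a b) s₀ = 0)
    (hM : ∀ t ∈ Icc a b, |iteratedDerivWithin n g (Icc a b) t| ≤ M) :
    ∀ s ∈ Icc a b, |g s| ≤ M / n.factorial * |s - s₀| ^ n := by
  have uniq : UniqueDiffOn ℝ (Icc a b) := uniqueDiffOn_Icc hab
  suffices ∀ m k, k + m = n → ∀ s ∈ Icc a b,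
      |iteratedDerivWithin k g (Icc a b) s| ≤ M / m.factorial * |s - s₀| ^ m by
    simpa using this n 0 (zero_add n)
  intro m
  induction m with
  | zero =>
    rintro k rfl s hs
    simpa using hM s hs
  | succ m ih =>
    intro k hk s hs
    have hkn : k < n := by omega
    have hbound := abs_le_of_abs_derivWithin_le_mul_abs_pow hs₀
      (hg.differentiableOn_iteratedDerivWithin (by exact_mod_cast hkn) uniq)
      (by simpa only [← iteratedDerivWithin_succ] using
        hg.continuousOn_iteratedDerivWithin (by exact_mod_cast hkn) uniq)
      (hg₀ k hkn)
      (by simpa only [← iteratedDerivWithin_succ] using ih (k + 1) (by omega))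
      s hs
    rw [Nat.factorial_succ, Nat.cast_mul, Nat.cast_succ]
    calc _ ≤ _ := hbound
      _ = _ := by field_simp

lemma abs_sub_le_sSup_div_factorial_mul_abs_pow {a b s₀ : ℝ} {n : ℕ} {f Q : ℝ → ℝ}
    (hab : a < b) (hs₀ : s₀ ∈ Icc a b) (hf : ContDiffOn ℝ n f (Icc a b))
    (hQ : ContDiffOn ℝ n Q (Icc a b))
    (hQf : ∀ k < n,
      iteratedDerivWithin k Q (Icc a b) s₀ = iteratedDerivWithin k f (Icc a b) s₀) :
    ∀ s ∈ Icc a b, |f s - Q s| ≤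
      sSup ((fun t => |iteratedDerivWithin n f (Icc a b) t - iteratedDerivWithin n Q (Icc a b) t|)
        '' Icc a b) / n.factorial * |s - s₀| ^ n := by
  have uniq : UniqueDiffOn ℝ (Icc a b) := uniqueDiffOn_Icc hab
  have hsub : ∀ k ≤ n, ∀ t ∈ Icc a b, iteratedDerivWithin k (f - Q) (Icc a b) t =
      iteratedDerivWithin k f (Icc a b) t - iteratedDerivWithin k Q (Icc a b) t :=
    fun k hk t ht => iteratedDerivWithin_sub ht uniq
      ((hf.of_le (by exact_mod_cast hk)) t ht) ((hQ.of_le (by exact_mod_cast hk)) t ht)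
  have hbdd : BddAbove ((fun t =>
      |iteratedDerivWithin n f (Icc a b) t - iteratedDerivWithin n Q (Icc a b) t|) '' Icc a b) :=
    (isCompact_Icc.image_of_continuousOn ((hf.continuousOn_iteratedDerivWithin le_rfl uniq).sub
      (hQ.continuousOn_iteratedDerivWithin le_rfl uniq)).abs).bddAbove
  exact abs_le_div_factorial_mul_abs_pow (g := f - Q) hab hs₀ (hf.sub hQ)
    (fun k hk => by rw [hsub k hk.le s₀ hs₀, hQf k hk, sub_self])
    (fun t ht => hsub n le_rfl t ht ▸ le_csSup hbdd ⟨t, ht, rfl⟩)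

theorem LinearMap.finrank_range_eq_of_ker_eq {R V W₁ W₂ : Type*} [Ring R] [AddCommGroup V]
    [AddCommGroup W₁] [AddCommGroup W₂] [Module R V] [Module R W₁] [Module R W₂]
    (f : V →ₗ[R] W₁) (g : V →ₗ[R] W₂) (h : ker f = ker g) :
    Module.finrank R (range f) = Module.finrank R (range g) :=
  ((f.quotKerEquivRange.symm.trans (Submodule.quotEquivOfEq _ _ h)).trans
    g.quotKerEquivRange).finrank_eq

def contDiffOnSubmodule (n : ℕ) (s : Set ℝ) : Submodule ℝ (ℝ → ℝ) where
  carrier := {f | ContDiffOn ℝ n f s}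
  add_mem' hf hg := hf.add hg
  zero_mem' := contDiffOn_const
  smul_mem' c _ hf := hf.const_smul c

def jetWithin {n : ℕ} {s : Set ℝ} (hs : UniqueDiffOn ℝ s) {x : ℝ} (hx : x ∈ s) :
    contDiffOnSubmodule n s →ₗ[ℝ] (Fin n → ℝ) where
  toFun f k := iteratedDerivWithin k f s x
  map_add' f g := funext fun k => iteratedDerivWithin_add hx hs
    ((f.2.of_le (by exact_mod_cast k.isLt.le)) x hx)
    ((g.2.of_le (by exact_mod_cast k.isLt.le)) x hx)
  map_smul' c f := funext fun k => iteratedDerivWithin_const_smul hx hs c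
    ((f.2.of_le (by exact_mod_cast k.isLt.le)) x hx)

section Pspace

variable {n : ℕ} {u v : ℝ → ℝ} {a b : ℝ}

lemma pspace_le_contDiffOnSubmodule (hu : ContDiffOn ℝ n u (Icc a b))
    (hv : ContDiffOn ℝ n v (Icc a b)) : Pspace n u v ≤ contDiffOnSubmodule n (Icc a b) := by
  refine Submodule.span_le.2 ?_
  rintro f (rfl | rfl | ⟨i, -, rfl⟩)
  exacts [hu, hv, (contDiff_id.pow i).contDiffOn]

lemma eqOn_zero_of_dW_eq_zero (hn : 0 < n) (hab : a < b) (hu : ContDiffOn ℝ n u (Icc a b))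
    (hv : ContDiffOn ℝ n v (Icc a b)) (hC2 : CondC2 n u v a b) {ψ : ℝ → ℝ}
    (hψ : ψ ∈ Pspace n u v) {s₀ : ℝ} (hs₀ : s₀ ∈ Ioo a b)
    (hψ₀ : ∀ k < n, dW a b k ψ s₀ = 0) :
    EqOn ψ 0 (Icc a b) := by
  have hψC : ContDiffOn ℝ (n - 2 : ℕ) ψ (Icc a b) :=
    (pspace_le_contDiffOnSubmodule hu hv hψ).of_le (by exact_mod_cast Nat.sub_le n 2)
  have hψn2 := hC2 ψ hψ s₀ hs₀ (hψ₀ _ (by omega)) (hψ₀ _ (by omega))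
  intro s hs
  simpa using abs_le_div_factorial_mul_abs_pow (M := 0) hab (Ioo_subset_Icc_self hs₀) hψC
    (fun k hk => hψ₀ k (by omega)) (fun t ht => (abs_eq_zero.2 (hψn2 t ht)).le) s hs

lemma eqOn_of_dW_eq (hn : 0 < n) (hab : a < b) (hu : ContDiffOn ℝ n u (Icc a b))
    (hv : ContDiffOn ℝ n v (Icc a b)) (hC2 : CondC2 n u v a b) {W Q : ℝ → ℝ}
    (hW : W ∈ Pspace n u v) (hQ : Q ∈ Pspace n u v) {s₀ : ℝ} (hs₀ : s₀ ∈ Ioo a b)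
    (hWQ : ∀ k < n, dW a b k W s₀ = dW a b k Q s₀) : EqOn W Q (Icc a b) := by
  have hs₀' : s₀ ∈ Icc a b := Ioo_subset_Icc_self hs₀
  have hC : ∀ {ψ}, ψ ∈ Pspace n u v → ∀ k < n, ContDiffWithinAt ℝ k ψ (Icc a b) s₀ :=
    fun hψ k hk =>
      ((pspace_le_contDiffOnSubmodule hu hv hψ).of_le (by exact_mod_cast hk.le)) s₀ hs₀'
  have hzero := eqOn_zero_of_dW_eq_zero hn hab hu hv hC2 (sub_mem hW hQ) hs₀ fun k hk => by
    rw [dW, iteratedDerivWithin_sub hs₀' (uniqueDiffOn_Icc hab) (hC hW k hk) (hC hQ k hk),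
      sub_eq_zero]
    exact hWQ k hk
  exact fun s hs => sub_eq_zero.1 (hzero hs)

lemma exists_mem_pspace_dW_eq (hn : 0 < n) (hab : a < b) (hu : ContDiffOn ℝ n u (Icc a b))
    (hv : ContDiffOn ℝ n v (Icc a b)) (hdim : dimP n u v a b = n) (hC2 : CondC2 n u v a b)
    {s₀ : ℝ} (hs₀ : s₀ ∈ Ioo a b) (y : Fin n → ℝ) :
    ∃ Q ∈ Pspace n u v, ∀ k : Fin n, dW a b k Q s₀ = y k := by
  have hs₀' : s₀ ∈ Icc a b := Ioo_subset_Icc_self hs₀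
  let jet := (jetWithin (uniqueDiffOn_Icc hab) hs₀').comp
    (Submodule.inclusion (pspace_le_contDiffOnSubmodule hu hv))
  let restrict := (restrictMap a b).domRestrict (Pspace n u v)
  have hker : LinearMap.ker jet = LinearMap.ker restrict := by
    ext ⟨ψ, hψ⟩
    simp only [LinearMap.mem_ker]
    constructor
    · intro h
      funext ⟨s, hs⟩
      exact eqOn_zero_of_dW_eq_zero hn hab hu hv hC2 hψ hs₀
        (fun k hk => congrFun h ⟨k, hk⟩) hs
    · intro h
      funext k
      have hψ0 : EqOn ψ 0 (Icc a b) := fun s hs => congrFun h ⟨s, hs⟩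
      exact (iteratedDerivWithin_congr hψ0 hs₀').trans (by simp)
  have hrange : LinearMap.range jet = ⊤ := Submodule.eq_top_of_finrank_eq <| by
    rw [LinearMap.finrank_range_eq_of_ker_eq jet restrict hker, LinearMap.range_domRestrict,
      Module.finrank_fin_fun]
    exact hdim
  obtain ⟨⟨Q, hQ⟩, hQy⟩ := LinearMap.range_eq_top.1 hrange y
  exact ⟨Q, hQ, congrFun hQy⟩

end Pspace

theorem statement15_general (n : ℕ) (hn : 3 ≤ n) (a b : ℝ) (hab : a < b) (u v : ℝ → ℝ)
    (hu : ContDiffOn ℝ n u (Set.Icc a b)) (hv : ContDiffOn ℝ n v (Set.Icc a b))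
    (hdim : dimP n u v a b = n) (hC2 : CondC2 n u v a b) :
    ∀ f : ℝ → ℝ, ContDiffOn ℝ n f (Set.Icc a b) → ∀ s₀ ∈ Set.Ioo a b,
      ∃ Q ∈ Pspace n u v,
        (∀ k < n, dW a b k Q s₀ = dW a b k f s₀) ∧
        (∀ W ∈ Pspace n u v,
          (∀ k < n, dW a b k W s₀ = dW a b k f s₀) → Set.EqOn W Q (Set.Icc a b)) ∧
        (∀ s ∈ Set.Icc a b,
          |f s - Q s| ≤
            (sSup ((fun t => |dW a b n f t - dW a b n Q t|) '' Set.Icc a b) /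
              Nat.factorial n) * |s - s₀| ^ n) := by
  intro f hf s₀ hs₀
  have hn0 : 0 < n := by omega
  obtain ⟨Q, hQ, hQf⟩ :=
    exists_mem_pspace_dW_eq hn0 hab hu hv hdim hC2 hs₀ fun k => dW a b k f s₀
  refine ⟨Q, hQ, fun k hk => hQf ⟨k, hk⟩, fun W hW hWf => ?_, ?_⟩
  · exact eqOn_of_dW_eq hn0 hab hu hv hC2 hW hQ hs₀ fun k hk =>
      (hWf k hk).trans (hQf ⟨k, hk⟩).symm
  · exact abs_sub_le_sSup_div_factorial_mul_abs_pow hab (Ioo_subset_Icc_self hs₀) hf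
      (pspace_le_contDiffOnSubmodule hu hv hQ) fun k hk => hQf ⟨k, hk⟩

/-- Under conditions (C1) and (C2) and `dim P^n_{u,v}([a,b]) = n`, for
every `f ∈ C^n([a,b])` and `s₀ ∈ (a,b)` there is a unique Hermite interpolant
`Q ∈ P^n_{u,v}([a,b])` with `Q^(k)(s₀) = f^(k)(s₀)` for `k = 0, ..., n-1`, and
`|f(s) − Q(s)| ≤ (M/n!) |s − s₀|^n` on `[a,b]`, where
`M = sup_{t ∈ [a,b]} |f^(n)(t) − Q^(n)(t)|`. -/
theorem statement15 (n : ℕ) (hn : 3 ≤ n) (a b : ℝ) (hab : a < b) (u v : ℝ → ℝ)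
    (hu : ContDiffOn ℝ n u (Set.Icc a b)) (hv : ContDiffOn ℝ n v (Set.Icc a b))
    (hdim : dimP n u v a b = n) (hC1 : CondC1 n u v a b) (hC2 : CondC2 n u v a b) :
    ∀ f : ℝ → ℝ, ContDiffOn ℝ n f (Set.Icc a b) → ∀ s₀ ∈ Set.Ioo a b,
      ∃ Q ∈ Pspace n u v,
        (∀ k < n, dW a b k Q s₀ = dW a b k f s₀) ∧
        (∀ W ∈ Pspace n u v,
          (∀ k < n, dW a b k W s₀ = dW a b k f s₀) → Set.EqOn W Q (Set.Icc a b)) ∧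
        (∀ s ∈ Set.Icc a b,
          |f s - Q s| ≤
            (sSup ((fun t => |dW a b n f t - dW a b n Q t|) '' Set.Icc a b) /
              Nat.factorial n) * |s - s₀| ^ n) :=
  statement15_general n hn a b hab u v hu hv hdim hC2
end
end
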